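/- arXiv:1811.08516 — 7 statements merged into one kernel-verified Lean document; each statement's English description precedes it below -/
import Mathlib

section
/- Let P = (X, ≼) be a finite poset, X′ ⊆ X, and 𝒞′ a set of maximal chains of P that preserves the decomposition of maximal chains intersecting in X′ (i.e., whenever C¹ = {x_{-k},…,x_{-1},x*,x_1,…,x_n} and C² = {y_{-l},…,y_{-1},x*,y_1,…,y_m} belong to 𝒞′ and intersect at x* ∈ X′, the recombined maximal chains C₁² = {x_{-k},…,x_{-1},x*,y_1,…,y_m} and C₂¹ = {y_{-l},…,y_{-1},x*,x_1,…,x_n} also belong to 𝒞′). Define the relation ≼_{𝒞′} on X′ by: x ≼_{𝒞′} y iff x = y or there exists C ∈ 𝒞′ with x, y ∈ C and x ≺ y. Then ≼_{𝒞′} is a partial order on X′. -/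
/-! Transitivity is the only point: from `x < y` in `C₁` and `y < z` in `C₂` with `y ∈ X'`,
recombining at `y` gives the chain `{w ∈ C₁ | w ≤ y} ∪ {w ∈ C₂ | y ≤ w}` of `𝒞'`,
which contains both `x` and `z`. -/

theorem subposet_partialOrder_general (X : Type*) [PartialOrder X]
    (X' : Set X) (𝒞' : Set (Set X))
    (hpres : ∀ C1 ∈ 𝒞', ∀ C2 ∈ 𝒞', ∀ x ∈ C1 ∩ C2 ∩ X',
      ({z ∈ C1 | z ≤ x} ∪ {z ∈ C2 | x ≤ z}) ∈ 𝒞' ∧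
      ({z ∈ C2 | z ≤ x} ∪ {z ∈ C1 | x ≤ z}) ∈ 𝒞')
    (r : X → X → Prop)
    (hr : ∀ x y, r x y ↔ (x = y ∨ ∃ C ∈ 𝒞', x ∈ C ∧ y ∈ C ∧ x < y)) :
    (∀ x ∈ X', r x x) ∧
    (∀ x ∈ X', ∀ y ∈ X', r x y → r y x → x = y) ∧
    (∀ x ∈ X', ∀ y ∈ X', ∀ z ∈ X', r x y → r y z → r x z) := by
  refine ⟨fun x _ => (hr x x).2 (Or.inl rfl), ?antisymm, ?trans⟩
  case antisymm =>
    intro x _ y _ hxy hyx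
    rcases (hr x y).1 hxy with rfl | ⟨-, -, -, -, hlt⟩
    · rfl
    rcases (hr y x).1 hyx with rfl | ⟨-, -, -, -, hlt'⟩
    · rfl
    exact absurd hlt' hlt.asymm
  case trans =>
    intro x _ y hy z _ hxy hyz
    rcases (hr x y).1 hxy with rfl | ⟨C1, hC1, hxC1, hyC1, hxy⟩
    · exact hyz
    rcases (hr y z).1 hyz with rfl | ⟨C2, hC2, hyC2, hzC2, hyz⟩
    · exact (hr x y).2 (Or.inr ⟨C1, hC1, hxC1, hyC1, hxy⟩)
    have hglued := (hpres C1 hC1 C2 hC2 y ⟨⟨hyC1, hyC2⟩, hy⟩).1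
    exact (hr x z).2 (Or.inr ⟨_, hglued, Or.inl ⟨hxC1, hxy.le⟩,
      Or.inr ⟨hzC2, hyz.le⟩, hxy.trans hyz⟩)

/-- Given a finite poset `X`, a subset `X'`, and a family `𝒞'` of maximal chains of `X`
that preserves the decomposition of maximal chains intersecting in `X'`, the relation
`x ≼_{𝒞'} y ↔ x = y ∨ ∃ C ∈ 𝒞', x ∈ C ∧ y ∈ C ∧ x < y` is a partial order on `X'`
(reflexive, antisymmetric and transitive on `X'`). -/
theorem subposet_partialOrder (X : Type*) [Fintype X] [PartialOrder X]
    (X' : Set X) (𝒞' : Set (Set X))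
    (hmax : ∀ C ∈ 𝒞', IsMaxChain (· ≤ ·) C)
    (hpres : ∀ C1 ∈ 𝒞', ∀ C2 ∈ 𝒞', ∀ x ∈ C1 ∩ C2 ∩ X',
      ({z ∈ C1 | z ≤ x} ∪ {z ∈ C2 | x ≤ z}) ∈ 𝒞' ∧
      ({z ∈ C2 | z ≤ x} ∪ {z ∈ C1 | x ≤ z}) ∈ 𝒞')
    (r : X → X → Prop)
    (hr : ∀ x y, r x y ↔ (x = y ∨ ∃ C ∈ 𝒞', x ∈ C ∧ y ∈ C ∧ x < y)) :
    (∀ x ∈ X', r x x) ∧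
    (∀ x ∈ X', ∀ y ∈ X', r x y → r y x → x = y) ∧
    (∀ x ∈ X', ∀ y ∈ X', ∀ z ∈ X', r x y → r y z → r x z) :=
  subposet_partialOrder_general X X' 𝒞' hpres r hr
end

section
/- With the setup of the preceding statement, for every maximal chain C of the poset P′ = (X′, ≼_{𝒞′}) of size at least two, there exists a maximal chain C′ ∈ 𝒞′ of P such that C = C′ ∩ X′. -/
/-!
A chain of `P'` with at least two elements lies inside a single member of `𝒞'`. Induct on its
size: remove its top element `m`; the rest lies in some `D ∈ 𝒞'`, and its new top `m₀ ∈ X'`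
shares some `E ∈ 𝒞'` with `m`, so splicing `D` below `m₀` with `E` above `m₀` gives a member of
`𝒞'` containing the whole chain. Maximality of `C` in `P'` then forces `C = C' ∩ X'`, the latter
being a chain of `P'`.
-/

open Set

theorem IsChain.exists_isGreatest_of_finite {α : Type*} [PartialOrder α] {s : Set α}
    (hs : IsChain (· ≤ ·) s) (hfin : s.Finite) (hne : s.Nonempty) : ∃ m, IsGreatest s m := by
  obtain ⟨m, hm⟩ := hfin.exists_maximal hne
  refine ⟨m, hm.prop, fun x hx => ?_⟩
  rcases eq_or_ne x m with rfl | hxm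
  · exact le_rfl
  exact (hs hx hm.prop hxm).elim id (hm.le_of_ge hx)

namespace ChainFamily

variable {X : Type*} [PartialOrder X] {X' : Set X} {𝒞 : Set (Set X)} {s C D E : Set X}
  {x y : X}

/-- The relation `≼_𝒞` of the paper. -/
def rel (𝒞 : Set (Set X)) (x y : X) : Prop :=
  x = y ∨ ∃ C ∈ 𝒞, x ∈ C ∧ y ∈ C ∧ x < y

/-- The form in which `𝒞` preserves the decomposition of maximal chains intersecting in `X'`. -/
def SpliceClosed (X' : Set X) (𝒞 : Set (Set X)) : Prop :=
  ∀ C₁ ∈ 𝒞, ∀ C₂ ∈ 𝒞, ∀ x ∈ C₁ ∩ C₂ ∩ X', {z ∈ C₁ | z ≤ x} ∪ {z ∈ C₂ | x ≤ z} ∈ 𝒞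

theorem rel.le (h : rel 𝒞 x y) : x ≤ y := by
  rcases h with rfl | ⟨_, _, _, _, hlt⟩
  exacts [le_rfl, hlt.le]

theorem rel.exists_mem_of_ne (h : rel 𝒞 x y) (hne : x ≠ y) : ∃ C ∈ 𝒞, x ∈ C ∧ y ∈ C := by
  rcases h with rfl | ⟨C, hC, hx, hy, -⟩
  exacts [absurd rfl hne, ⟨C, hC, hx, hy⟩]

theorem _root_.IsChain.le_of_rel (hs : IsChain (rel 𝒞) s) : IsChain (· ≤ ·) s :=
  hs.mono_rel fun _ _ => rel.le

theorem _root_.IsChain.exists_mem_of_rel (hs : IsChain (rel 𝒞) s) (hx : x ∈ s) (hy : y ∈ s)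
    (hne : x ≠ y) : ∃ C ∈ 𝒞, x ∈ C ∧ y ∈ C := by
  rcases hs hx hy hne with h | h
  · exact h.exists_mem_of_ne hne
  · obtain ⟨C, hC, hyC, hxC⟩ := h.exists_mem_of_ne hne.symm
    exact ⟨C, hC, hxC, hyC⟩

theorem _root_.IsChain.rel_of_mem (hC : IsChain (· ≤ ·) C) (hC𝒞 : C ∈ 𝒞) :
    IsChain (rel 𝒞) C := fun _ hx _ hy hne =>
  (hC hx hy hne).imp (fun h => Or.inr ⟨C, hC𝒞, hx, hy, h.lt_of_ne hne⟩)
    (fun h => Or.inr ⟨C, hC𝒞, hy, hx, h.lt_of_ne hne.symm⟩)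

theorem SpliceClosed.exists_insert_subset (h𝒞 : SpliceClosed X' 𝒞) (hD : D ∈ 𝒞) (hE : E ∈ 𝒞)
    (hsD : s ⊆ D) {m₀ m : X} (hm₀ : IsGreatest s m₀) (hm₀X' : m₀ ∈ X') (hm₀E : m₀ ∈ E)
    (hmE : m ∈ E) (hle : m₀ ≤ m) : ∃ C ∈ 𝒞, insert m s ⊆ C := by
  refine ⟨_, h𝒞 D hD E hE m₀ ⟨⟨hsD hm₀.1, hm₀E⟩, hm₀X'⟩, ?_⟩
  rintro x (rfl | hx)
  · exact Or.inr ⟨hmE, hle⟩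
  · exact Or.inl ⟨hsD hx, hm₀.2 hx⟩

theorem SpliceClosed.exists_superset (h𝒞 : SpliceClosed X' 𝒞) (hsX' : s ⊆ X')
    (hs : IsChain (rel 𝒞) s) (hcard : 2 ≤ s.ncard) : ∃ C ∈ 𝒞, s ⊆ C := by
  obtain ⟨n, hn⟩ := Nat.exists_eq_add_of_le' hcard
  clear hcard
  induction n generalizing s with
  | zero =>
    obtain ⟨a, b, hab, rfl⟩ := ncard_eq_two.mp hn
    obtain ⟨C, hC, haC, hbC⟩ :=
      hs.exists_mem_of_rel (mem_insert a _) (mem_insert_of_mem a rfl) hab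
    exact ⟨C, hC, insert_subset haC (singleton_subset_iff.mpr hbC)⟩
  | succ n ih =>
    have hfin : s.Finite := finite_of_ncard_pos (by omega)
    obtain ⟨m, hm⟩ :=
      hs.le_of_rel.exists_isGreatest_of_finite hfin (nonempty_of_ncard_ne_zero (by omega))
    have hn' : (s \ {m}).ncard = n + 2 := by
      have := ncard_sdiff_singleton_add_one hm.1 hfin
      omega
    obtain ⟨D, hD, hsD⟩ := ih (sdiff_subset.trans hsX') (hs.mono sdiff_subset) hn'
    obtain ⟨m₀, hm₀⟩ := (hs.mono sdiff_subset).le_of_rel.exists_isGreatest_of_finite hfin.sdiff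
      (nonempty_of_ncard_ne_zero (s := s \ {m}) (by omega))
    obtain ⟨E, hE, hm₀E, hmE⟩ := hs.exists_mem_of_rel hm₀.1.1 hm.1 hm₀.1.2
    obtain ⟨C, hC, hsC⟩ := h𝒞.exists_insert_subset hD hE hsD hm₀ (hsX' hm₀.1.1) hm₀E hmE
      (hm.2 hm₀.1.1)
    exact ⟨C, hC, by rwa [insert_sdiff_singleton, insert_eq_of_mem hm.1] at hsC⟩

end ChainFamily

theorem subposet_maxChain_from_family_general (X : Type*) [PartialOrder X]
    (X' : Set X) (𝒞' : Set (Set X))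
    (hmax : ∀ C ∈ 𝒞', IsMaxChain (· ≤ ·) C)
    (hpres : ∀ C1 ∈ 𝒞', ∀ C2 ∈ 𝒞', ∀ x ∈ C1 ∩ C2 ∩ X',
      ({z ∈ C1 | z ≤ x} ∪ {z ∈ C2 | x ≤ z}) ∈ 𝒞' ∧
      ({z ∈ C2 | z ≤ x} ∪ {z ∈ C1 | x ≤ z}) ∈ 𝒞')
    (r : X → X → Prop)
    (hr : ∀ x y, r x y ↔ (x = y ∨ ∃ C ∈ 𝒞', x ∈ C ∧ y ∈ C ∧ x < y))
    (C : Set X) (hCsub : C ⊆ X') (hchain : IsChain r C)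
    (hCmax : ∀ D ⊆ X', IsChain r D → C ⊆ D → C = D)
    (hcard : 2 ≤ C.ncard) :
    ∃ C' ∈ 𝒞', C = C' ∩ X' := by
  obtain rfl : r = ChainFamily.rel 𝒞' := funext₂ fun x y => propext (hr x y)
  have hsplice : ChainFamily.SpliceClosed X' 𝒞' := fun C₁ h₁ C₂ h₂ x hx =>
    (hpres C₁ h₁ C₂ h₂ x hx).1
  obtain ⟨C', hC', hCC'⟩ := hsplice.exists_superset hCsub hchain hcard
  have hchain' : IsChain (ChainFamily.rel 𝒞') (C' ∩ X') :=
    ((hmax C' hC').isChain.rel_of_mem hC').mono inter_subset_left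
  exact ⟨C', hC', hCmax _ inter_subset_right hchain' (subset_inter hCC' hCsub)⟩

/-- With the setup of the subposet `P' = (X', ≼_{𝒞'})`, every maximal chain `C` of `P'`
of size at least two is of the form `C' ∩ X'` for some maximal chain `C' ∈ 𝒞'` of `P`. -/
theorem subposet_maxChain_from_family (X : Type*) [Fintype X] [PartialOrder X]
    (X' : Set X) (𝒞' : Set (Set X))
    (hmax : ∀ C ∈ 𝒞', IsMaxChain (· ≤ ·) C)
    (hpres : ∀ C1 ∈ 𝒞', ∀ C2 ∈ 𝒞', ∀ x ∈ C1 ∩ C2 ∩ X',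
      ({z ∈ C1 | z ≤ x} ∪ {z ∈ C2 | x ≤ z}) ∈ 𝒞' ∧
      ({z ∈ C2 | z ≤ x} ∪ {z ∈ C1 | x ≤ z}) ∈ 𝒞')
    (r : X → X → Prop)
    (hr : ∀ x y, r x y ↔ (x = y ∨ ∃ C ∈ 𝒞', x ∈ C ∧ y ∈ C ∧ x < y))
    (C : Set X) (hCsub : C ⊆ X') (hchain : IsChain r C)
    (hCmax : ∀ D ⊆ X', IsChain r D → C ⊆ D → C = D)
    (hcard : 2 ≤ C.ncard) :
    ∃ C' ∈ 𝒞', C = C' ∩ X' :=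
  subposet_maxChain_from_family_general X X' 𝒞' hmax hpres r hr C hCsub hchain hCmax hcard
end

section
/- Let G = (V, E) be a simple directed acyclic connected graph with distinguished source s and destination t. Define the relation ≼_G on the edge set E by: u ≼_G v iff u = v or there exists an s–t path traversing u and then v. Then ≼_G is a partial order on E. -/
/-- `p` is an `s`–`t` path in the directed graph with edge set `E`:
a nonempty list of edges, consecutive edges matching head-to-tail,
starting at `s` and ending at `t`. -/
def IsSTPath {V : Type*} (E : Set (V × V)) (s t : V) (p : List (V × V)) : Prop :=
  p ≠ [] ∧ (∀ e ∈ p, e ∈ E) ∧ (p.head?.map Prod.fst = some s) ∧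
    (p.getLast?.map Prod.snd = some t) ∧ List.Chain' (fun e f => e.2 = f.1) p

/-- The graph with edge set `E` has no directed cycle. -/
def NoDirectedCycle {V : Type*} (E : Set (V × V)) : Prop :=
  ¬ ∃ p : List (V × V), p ≠ [] ∧ (∀ e ∈ p, e ∈ E) ∧
    List.Chain' (fun e f => e.2 = f.1) p ∧
    p.getLast?.map Prod.snd = p.head?.map Prod.fst

/-!
Cutting an `s`–`t` path at its edges gives paths between the endpoints of the cut edges,
and paths with matching endpoints concatenate. Hence if `u` precedes `v` on one `s`–`t` path
and `v` precedes `w` on another, splicing the first path up to `v` with the second from `v`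
on gives an `s`–`t` path through `u` and then `w`; and if also `v` preceded `u`, the segment
from `u` to `v` of the first path followed by the segment from `v` to `u` of the second would
be a directed cycle.
-/

namespace IsSTPath

variable {V : Type*} {E : Set (V × V)} {a b c : V} {x y : V × V} {p q : List (V × V)}

theorem append (hp : IsSTPath E a b p) (hq : IsSTPath E b c q) : IsSTPath E a c (p ++ q) := by
  obtain ⟨hp0, hpE, hpa, hpb, hpc⟩ := hp
  obtain ⟨hq0, hqE, hqb, hqc, hqch⟩ := hq
  refine ⟨by simp [hp0], ?_, ?_, ?_, ?_⟩
  · simp only [List.mem_append]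
    rintro e (he | he)
    exacts [hpE e he, hqE e he]
  · rwa [List.head?_append_of_ne_nil _ hp0]
  · rwa [List.getLast?_append_of_ne_nil _ hq0]
  · refine List.IsChain.append hpc hqch fun e he f hf => ?_
    rw [Option.mem_def] at he hf
    simp only [he, hf, Option.map_some, Option.some.injEq] at hpb hqb
    rw [hpb, hqb]

theorem left_of_append_cons (h : IsSTPath E a c (p ++ x :: q)) (hp : p ≠ []) :
    IsSTPath E a x.1 p := by
  obtain ⟨-, hE, ha, -, hch⟩ := h
  obtain ⟨hpch, -, hlink⟩ := List.isChain_append.1 hch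
  refine ⟨hp, fun e he => hE e (by simp [he]), ?_, ?_, hpch⟩
  · rwa [List.head?_append_of_ne_nil _ hp] at ha
  · obtain ⟨e, he⟩ := Option.ne_none_iff_exists'.1 (List.getLast?_eq_none_iff.not.2 hp)
    simp [he, hlink e he x rfl]

theorem right_of_append_cons (h : IsSTPath E a c (p ++ x :: q)) : IsSTPath E x.1 c (x :: q) := by
  obtain ⟨-, hE, -, hc, hch⟩ := h
  refine ⟨List.cons_ne_nil x q, fun e he => hE e (by simp [he]), rfl, ?_, ?_⟩
  · rwa [List.getLast?_append_of_ne_nil _ (List.cons_ne_nil x q)] at hc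
  · exact (List.isChain_append.1 hch).2.1

theorem segment {l₁ l₂ l₃ : List (V × V)} (h : IsSTPath E a c (l₁ ++ x :: l₂ ++ y :: l₃)) :
    IsSTPath E x.1 y.1 (x :: l₂) := by
  rw [List.append_assoc, List.cons_append] at h
  have hx := h.right_of_append_cons
  rw [← List.cons_append] at hx
  exact hx.left_of_append_cons (List.cons_ne_nil x l₂)

end IsSTPath

theorem NoDirectedCycle.not_isSTPath_self {V : Type*} {E : Set (V × V)} (hE : NoDirectedCycle E)
    {a : V} {p : List (V × V)} : ¬ IsSTPath E a a p :=
  fun ⟨hp0, hpE, ha, ha', hch⟩ => hE ⟨p, hp0, hpE, hch, ha'.trans ha.symm⟩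

/-- The strict part of the relation `≼_G`. -/
def EdgePrecedes {V : Type*} (E : Set (V × V)) (s t : V) (u v : V × V) : Prop :=
  ∃ p l₁ l₂ l₃, IsSTPath E s t p ∧ p = l₁ ++ u :: l₂ ++ v :: l₃

namespace EdgePrecedes

variable {V : Type*} {E : Set (V × V)} {s t : V} {u v w : V × V}

theorem trans (huv : EdgePrecedes E s t u v) (hvw : EdgePrecedes E s t v w) :
    EdgePrecedes E s t u w := by
  obtain ⟨_, l₁, l₂, l₃, hp, rfl⟩ := huv
  obtain ⟨_, m₁, m₂, m₃, hq, rfl⟩ := hvw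
  have hsv : IsSTPath E s v.1 (l₁ ++ u :: l₂) := hp.left_of_append_cons (by simp)
  have hvt : IsSTPath E v.1 t (v :: (m₂ ++ w :: m₃)) := by
    rw [List.append_assoc] at hq
    exact hq.right_of_append_cons
  exact ⟨_, l₁, l₂ ++ v :: m₂, m₃, hsv.append hvt, by simp⟩

theorem asymm (hE : NoDirectedCycle E) (huv : EdgePrecedes E s t u v) :
    ¬ EdgePrecedes E s t v u := by
  rintro ⟨_, m₁, m₂, m₃, hq, rfl⟩
  obtain ⟨_, l₁, l₂, l₃, hp, rfl⟩ := huv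
  exact hE.not_isSTPath_self (hp.segment.append hq.segment)

end EdgePrecedes

theorem edge_relation_partialOrder_general {V : Type*} (E : Set (V × V)) (s t : V)
    (hacyc : NoDirectedCycle E)
    (r : (V × V) → (V × V) → Prop)
    (hr : ∀ u v, r u v ↔ (u = v ∨ ∃ p l₁ l₂ l₃, IsSTPath E s t p ∧
      p = l₁ ++ u :: l₂ ++ v :: l₃)) :
    (∀ u ∈ E, r u u) ∧
    (∀ u ∈ E, ∀ v ∈ E, r u v → r v u → u = v) ∧
    (∀ u ∈ E, ∀ v ∈ E, ∀ w ∈ E, r u v → r v w → r u w) := by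
  have hr' : ∀ u v, r u v ↔ u = v ∨ EdgePrecedes E s t u v := hr
  refine ⟨fun u _ => (hr' u u).2 (Or.inl rfl), ?_, ?_⟩
  · intro u _ v _ huv hvu
    rcases (hr' u v).1 huv with h | huv'
    · exact h
    rcases (hr' v u).1 hvu with h | hvu'
    · exact h.symm
    exact absurd hvu' (huv'.asymm hacyc)
  · intro u _ v _ w _ huv hvw
    rcases (hr' u v).1 huv with rfl | huv'
    · exact hvw
    rcases (hr' v w).1 hvw with rfl | hvw'
    · exact huv
    exact (hr' u w).2 (Or.inr (huv'.trans hvw'))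

/-- On a simple directed acyclic connected graph with source `s` and destination `t`
(every edge lies on some `s`–`t` path), the relation `u ≼_G v` iff `u = v` or some
`s`–`t` path traverses `u` and then `v`, is a partial order on the edge set `E`. -/
theorem edge_relation_partialOrder {V : Type*} (E : Set (V × V)) (s t : V)
    (hacyc : NoDirectedCycle E)
    (hconn : ∀ e ∈ E, ∃ p, IsSTPath E s t p ∧ e ∈ p)
    (r : (V × V) → (V × V) → Prop)
    (hr : ∀ u v, r u v ↔ (u = v ∨ ∃ p l₁ l₂ l₃, IsSTPath E s t p ∧
      p = l₁ ++ u :: l₂ ++ v :: l₃)) :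
    (∀ u ∈ E, r u u) ∧
    (∀ u ∈ E, ∀ v ∈ E, r u v → r v u → u = v) ∧
    (∀ u ∈ E, ∀ v ∈ E, ∀ w ∈ E, r u v → r v w → r u w) :=
  edge_relation_partialOrder_general E s t hacyc r hr
end

section
/- Let X be a finite set, 𝒞 a collection of subsets of X, ρ ∈ [0,1]^X, π ∈ (−∞,1]^𝒞, and δ_C = ∑_{x∈C} ρ_x − π_C ≥ 0 for all C. The feasibility problem (D)—existence of a probability distribution σ over 2^X with ∑_{S∋x} σ_S = ρ_x for all x and ∑_{S:S∩C≠∅} σ_S ≥ π_C for all C—is feasible if and only if the optimal value of the linear program (Q): minimize ∑_S σ_S subject to σ ≥ 0, ∑_{S∋x} σ_S = ρ_x for all x, and ∑_{S:|S∩C|≥2} σ_S(|S∩C|−1) ≤ δ_C for all C, is at most 1. -/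
/-!
Double counting gives `∑_{x ∈ C} ρ_x = ∑_S σ_S |S ∩ C|` whenever `σ` has marginals `ρ`, so the
left-hand side of the constraint of (Q) at `C` is `∑_{x ∈ C} ρ_x` minus the mass of the sets
hitting `C`: the constraints of (Q) are exactly the hitting constraints of (D). A solution of (Q)
of total mass at most 1 becomes a probability distribution by putting the missing mass on `∅`,
which changes neither the marginals nor the hitting masses.
-/

open Finset

section
variable {α M : Type*} [Fintype α] [DecidableEq α] [AddCommMonoid M]

lemma sum_filter_add_single_of_not {p : α → Prop} [DecidablePred p] {a : α} (ha : ¬ p a)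
    (f : α → M) (c : M) :
    ∑ x ∈ univ.filter p, (f x + (Pi.single a c : α → M) x) = ∑ x ∈ univ.filter p, f x := by
  refine sum_congr rfl fun x hx => ?_
  rw [Pi.single_apply, if_neg (by rintro rfl; exact ha (mem_filter.1 hx).2), add_zero]

lemma sum_add_single (f : α → M) (a : α) (c : M) :
    ∑ x, (f x + (Pi.single a c : α → M) x) = ∑ x, f x + c := by
  rw [sum_add_distrib, sum_pi_single' a c univ, if_pos (mem_univ a)]

end

section
variable {X R : Type*} [Fintype X] [DecidableEq X]

lemma sum_sum_filter_mem_eq_sum_mul_card [CommSemiring R] (σ : Finset X → R) (C : Finset X) :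
    ∑ x ∈ C, ∑ S ∈ univ.filter (fun S : Finset X => x ∈ S), σ S
      = ∑ S : Finset X, σ S * ((S ∩ C).card : R) := by
  simp only [sum_filter]
  rw [sum_comm]
  refine sum_congr rfl fun S _ => ?_
  rw [← sum_filter, sum_const, nsmul_eq_mul, mul_comm, inter_comm, filter_mem_eq_inter]

lemma sum_filter_two_le_card_inter [CommRing R] (σ : Finset X → R) (C : Finset X) :
    ∑ S ∈ univ.filter (fun S : Finset X => 2 ≤ (S ∩ C).card), σ S * (((S ∩ C).card : R) - 1)
      = ∑ S : Finset X, σ S * ((S ∩ C).card : R)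
        - ∑ S ∈ univ.filter (fun S : Finset X => (S ∩ C).Nonempty), σ S := by
  simp only [sum_filter, ← sum_sub_distrib]
  refine sum_congr rfl fun S _ => ?_
  rcases Nat.lt_or_ge (S ∩ C).card 2 with h | h
  · interval_cases hk : (S ∩ C).card
    · simp [card_eq_zero.1 hk]
    · simp [← card_pos, hk]
  · simp [h, ← card_pos, show 0 < (S ∩ C).card by omega]
    ring

lemma sum_filter_two_le_card_inter_of_marginals [CommRing R] {σ : Finset X → R} {ρ : X → R}
    (hρ : ∀ x, ∑ S ∈ univ.filter (fun S : Finset X => x ∈ S), σ S = ρ x) (C : Finset X) :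
    ∑ S ∈ univ.filter (fun S : Finset X => 2 ≤ (S ∩ C).card), σ S * (((S ∩ C).card : R) - 1)
      = ∑ x ∈ C, ρ x - ∑ S ∈ univ.filter (fun S : Finset X => (S ∩ C).Nonempty), σ S := by
  simp only [sum_filter_two_le_card_inter, ← sum_sum_filter_mem_eq_sum_mul_card, hρ]

end

theorem D_feasible_iff_Q_le_one_general (X : Type*) [Fintype X] [DecidableEq X]
    (ρ : X → ℝ) (𝒞 : Set (Finset X)) (π : Finset X → ℝ) :
    (∃ σ : Finset X → ℝ,
      (∀ S, 0 ≤ σ S) ∧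
      (∑ S : Finset X, σ S = 1) ∧
      (∀ x : X, ∑ S ∈ univ.filter (fun S : Finset X => x ∈ S), σ S = ρ x) ∧
      (∀ C ∈ 𝒞, π C ≤ ∑ S ∈ univ.filter (fun S : Finset X => (S ∩ C).Nonempty), σ S)) ↔
    (∃ σ : Finset X → ℝ,
      (∀ S, 0 ≤ σ S) ∧
      (∀ x : X, ∑ S ∈ univ.filter (fun S : Finset X => x ∈ S), σ S = ρ x) ∧
      (∀ C ∈ 𝒞, ∑ S ∈ univ.filter (fun S : Finset X => 2 ≤ (S ∩ C).card),
          σ S * (((S ∩ C).card : ℝ) - 1) ≤ (∑ x ∈ C, ρ x) - π C) ∧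
      (∑ S : Finset X, σ S ≤ 1)) := by
  constructor
  · rintro ⟨σ, hσ0, hσ1, hρ, hπ⟩
    refine ⟨σ, hσ0, hρ, fun C hC => ?_, hσ1.le⟩
    rw [sum_filter_two_le_card_inter_of_marginals hρ]
    linarith [hπ C hC]
  · rintro ⟨σ, hσ0, hρ, hδ, hσ1⟩
    refine ⟨fun S => σ S + (Pi.single ∅ (1 - ∑ S, σ S) : Finset X → ℝ) S, fun S => ?_,
      by rw [sum_add_single]; ring,
      fun x => (sum_filter_add_single_of_not (p := (x ∈ ·)) (notMem_empty x) σ _).trans (hρ x),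
      fun C hC => ?_⟩
    · simp only [Pi.single_apply]
      split_ifs <;> linarith [hσ0 S]
    · rw [sum_filter_add_single_of_not (by simp)]
      linarith [hδ C hC, sum_filter_two_le_card_inter_of_marginals hρ C]

/-- The feasibility problem (D) — existence of a probability distribution over `2^X` with
marginals `ρ` and hitting probabilities at least `π` — is feasible if and only if the
linear program (Q) has a feasible solution with objective value `∑_S σ_S` at most 1. -/
theorem D_feasible_iff_Q_le_one (X : Type*) [Fintype X] [DecidableEq X]
    (ρ : X → ℝ) (hρ0 : ∀ x, 0 ≤ ρ x) (hρ1 : ∀ x, ρ x ≤ 1)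
    (𝒞 : Set (Finset X)) (π : Finset X → ℝ) (hπ : ∀ C ∈ 𝒞, π C ≤ 1)
    (hδ : ∀ C ∈ 𝒞, 0 ≤ (∑ x ∈ C, ρ x) - π C) :
    (∃ σ : Finset X → ℝ,
      (∀ S, 0 ≤ σ S) ∧
      (∑ S : Finset X, σ S = 1) ∧
      (∀ x : X, ∑ S ∈ univ.filter (fun S : Finset X => x ∈ S), σ S = ρ x) ∧
      (∀ C ∈ 𝒞, π C ≤ ∑ S ∈ univ.filter (fun S : Finset X => (S ∩ C).Nonempty), σ S)) ↔
    (∃ σ : Finset X → ℝ,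
      (∀ S, 0 ≤ σ S) ∧
      (∀ x : X, ∑ S ∈ univ.filter (fun S : Finset X => x ∈ S), σ S = ρ x) ∧
      (∀ C ∈ 𝒞, ∑ S ∈ univ.filter (fun S : Finset X => 2 ≤ (S ∩ C).card),
          σ S * (((S ∩ C).card : ℝ) - 1) ≤ (∑ x ∈ C, ρ x) - π C) ∧
      (∑ S : Finset X, σ S ≤ 1)) :=
  D_feasible_iff_Q_le_one_general X ρ 𝒞 π
end

section
/- Let P = (X, ≼) be a finite nonempty poset with set of maximal chains 𝒞, and suppose ρ ∈ [0,1]^X and π ∈ (−∞,1]^𝒞 satisfy: (1) ∑_{x∈C} ρ_x ≥ π_C for all C ∈ 𝒞, and (2) the conservation law: whenever two maximal chains C¹, C² intersect at x* and recombine into C₁², C₂¹ with C¹∪C² = C₁²∪C₂¹, then π_{C¹} + π_{C²} = π_{C₁²} + π_{C₂¹}. Then there exists a probability distribution σ over 2^X such that ∑_{S∋x} σ_S = ρ_x for all x ∈ X and ∑_{S:S∩C≠∅} σ_S ≥ π_C for all C ∈ 𝒞. -/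
/-!
Each element `z` gets the arc of length `ρ z` of the circle `ℝ/ℤ` ending at `arcEnd π ρ z`, the
largest part of a demand `π C` (`C` a maximal chain through `z`) that the elements of `C` above
`z` cannot cover. The random set consists of the elements whose arc contains a uniform point of
`(0, 1]`, so `x` lies in it with probability `ρ x`.

For a maximal chain `C`, descending from its top, `π C` is at most the measure of `(0, arcEnd x]`
together with the arcs of the elements of `C` above `x`. Passing from the successor `y` of `x` to
`x` costs nothing when the arc of `y` overlaps `(0, arcEnd x]`; otherwise recombine `C` at `y`
with a chain attaining `arcEnd y`: the conservation law shows that `π C` falls short of the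
bound for the recombined chain by at least the gap. At the least element `m` of `C`, condition
(1) gives `arcEnd m ≤ ρ m`, so `(0, arcEnd m]` lies inside the arc of `m`.
-/

section Chain

open Set

variable {α : Type*} [PartialOrder α] {s t c : Set α} {y z : α}

theorem IsMaxChain.mem_of_forall_total (hs : IsMaxChain (· ≤ ·) s)
    (hz : ∀ a ∈ s, z ≤ a ∨ a ≤ z) : z ∈ s := by
  have := hs.2 (hs.1.insert fun a ha _ => hz a ha) (subset_insert z s)
  exact this ▸ mem_insert z s

theorem IsMaxChain.mem_of_le_of_inter_Iic_subset (hs : IsMaxChain (· ≤ ·) s) (hy : y ∈ s)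
    (hc : IsChain (· ≤ ·) c) (hsc : s ∩ Iic y ⊆ c) (hz : z ∈ c) (hzy : z ≤ y) : z ∈ s :=
  hs.mem_of_forall_total fun _ ha =>
    (hs.1.total ha hy).elim (fun hay => hc.total hz (hsc ⟨ha, hay⟩))
      (fun hya => Or.inl (hzy.trans hya))

theorem IsMaxChain.mem_of_ge_of_inter_Ici_subset (hs : IsMaxChain (· ≤ ·) s) (hy : y ∈ s)
    (hc : IsChain (· ≤ ·) c) (hsc : s ∩ Ici y ⊆ c) (hz : z ∈ c) (hyz : y ≤ z) : z ∈ s :=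
  IsMaxChain.mem_of_le_of_inter_Iic_subset (α := αᵒᵈ) hs.symm hy hc.symm hsc hz hyz

theorem IsMaxChain.inter_Iic_union_inter_Ici (hs : IsMaxChain (· ≤ ·) s)
    (ht : IsMaxChain (· ≤ ·) t) (hys : y ∈ s) (hyt : y ∈ t) :
    IsMaxChain (· ≤ ·) (s ∩ Iic y ∪ t ∩ Ici y) := by
  refine ⟨?_, fun c hc hsub => hsub.antisymm fun z hz => ?_⟩
  · rintro a (⟨has, hay⟩ | ⟨hat, hya⟩) b (⟨hbs, hby⟩ | ⟨hbt, hyb⟩) hab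
    · exact hs.1 has hbs hab
    · exact Or.inl (hay.trans hyb)
    · exact Or.inr (hby.trans hya)
    · exact ht.1 hat hbt hab
  have hyc : y ∈ c := hsub (Or.inl ⟨hys, le_rfl⟩)
  rcases hc.total hz hyc with hzy | hyz
  · exact Or.inl ⟨hs.mem_of_le_of_inter_Iic_subset hys hc (subset_union_left.trans hsub) hz hzy,
      hzy⟩
  · exact Or.inr ⟨ht.mem_of_ge_of_inter_Ici_subset hyt hc (subset_union_right.trans hsub) hz hyz,
      hyz⟩

theorem IsChain.exists_isLeast [WellFoundedLT α] (hs : IsChain (· ≤ ·) s) (hne : s.Nonempty) :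
    ∃ m, IsLeast s m := by
  obtain ⟨m, hm⟩ := exists_minimal_of_wellFoundedLT (· ∈ s) hne
  exact ⟨m, hm.prop, fun z hz => (hs.total hm.prop hz).elim id (hm.le_of_le hz)⟩

end Chain

section Recombine

variable {X : Type*} [DecidableEq X] [PartialOrder X] [DecidableRel (· ≤ · : X → X → Prop)]
  {C D : Finset X} {x y : X}

def recombine (C D : Finset X) (y : X) : Finset X :=
  C.filter (· ≤ y) ∪ D.filter (y ≤ ·)

def ConservationLaw (π : Finset X → ℝ) : Prop :=
  ∀ C1 C2 : Finset X, IsMaxChain (· ≤ ·) (C1 : Set X) → IsMaxChain (· ≤ ·) (C2 : Set X) →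
    ∀ x ∈ C1 ∩ C2, π C1 + π C2 = π (recombine C1 C2 x) + π (recombine C2 C1 x)

theorem IsMaxChain.recombine (hC : IsMaxChain (· ≤ ·) (C : Set X))
    (hD : IsMaxChain (· ≤ ·) (D : Set X)) (hyC : y ∈ C) (hyD : y ∈ D) :
    IsMaxChain (· ≤ ·) (recombine C D y : Set X) := by
  rw [_root_.recombine, Finset.coe_union, Finset.coe_filter, Finset.coe_filter]
  exact hC.inter_Iic_union_inter_Ici hD hyC hyD

theorem filter_ge_recombine (hyD : y ∈ D) :
    (recombine C D y).filter (y ≤ ·) = D.filter (y ≤ ·) := by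
  ext w
  simp only [recombine, Finset.mem_filter, Finset.mem_union]
  constructor
  · rintro ⟨⟨-, hwy⟩ | hw, hyw⟩
    · obtain rfl := le_antisymm hwy hyw
      exact ⟨hyD, hyw⟩
    · exact hw
  · exact fun hw => ⟨Or.inr hw, hw.2⟩

theorem filter_ge_recombine_of_succ (hxC : x ∈ C) (hyD : y ∈ D) (hxy : x < y)
    (hsucc : ∀ z ∈ C, x < z → y ≤ z) :
    (recombine C D y).filter (x ≤ ·) = insert x (D.filter (y ≤ ·)) := by
  ext w
  simp only [recombine, Finset.mem_filter, Finset.mem_union, Finset.mem_insert]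
  constructor
  · rintro ⟨⟨hwC, hwy⟩ | hw, hxw⟩
    · rcases hxw.eq_or_lt with rfl | hxw
      · exact Or.inl rfl
      · obtain rfl := le_antisymm hwy (hsucc w hwC hxw)
        exact Or.inr ⟨hyD, le_rfl⟩
    · exact Or.inr hw
  · rintro (rfl | hw)
    exacts [⟨Or.inl ⟨hxC, hxy.le⟩, le_rfl⟩, ⟨Or.inr hw, hxy.le.trans hw.2⟩]

end Recombine

section CircleArc

open Set MeasureTheory

/-- The arc of `ℝ/ℤ` of length `r` ending at `e` (closed at `e`), lifted to `ℝ`. -/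
def circleArc (e r : ℝ) : Set ℝ := {u | Int.fract (e - u) < r}

variable {e r : ℝ}

theorem measurableSet_circleArc : MeasurableSet (circleArc e r) :=
  measurableSet_lt (measurable_const.sub measurable_id).fract measurable_const

theorem Ioc_subset_circleArc (hr : r ≤ 1) : Ioc (e - r) e ⊆ circleArc e r := by
  rintro u ⟨hlt, hle⟩
  change Int.fract (e - u) < r
  rw [Int.fract_eq_self.mpr ⟨by linarith, by linarith⟩]
  linarith

theorem circleArc_inter_Ioc (hr : r ≤ 1) : circleArc e r ∩ Ioc (e - 1) e = Ioc (e - r) e := by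
  refine Subset.antisymm (fun u ⟨hu, hlt, hle⟩ => ⟨?_, hle⟩) fun u hu =>
    ⟨Ioc_subset_circleArc hr hu, Ioc_subset_Ioc_left (by linarith) hu⟩
  change Int.fract (e - u) < r at hu
  rw [Int.fract_eq_self.mpr ⟨by linarith, by linarith⟩] at hu
  linarith

theorem measureReal_circleArc (hr₀ : 0 ≤ r) (hr₁ : r ≤ 1) :
    (volume.restrict (Ioc (0 : ℝ) 1)).real (circleArc e r) = r := by
  have hper : ∀ g : AddSubgroup.zmultiples (1 : ℝ),
      (g +ᵥ ·) ⁻¹' circleArc e r = circleArc e r := by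
    rintro ⟨_, n, rfl⟩
    ext u
    show Int.fract (e - (n • (1 : ℝ) + u)) < r ↔ Int.fract (e - u) < r
    rw [zsmul_one, add_comm, ← sub_sub, Int.fract_sub_intCast]
  -- both `(0, 1]` and `(e - 1, e]` are fundamental domains of `ℤ` acting on `ℝ`
  have := (isAddFundamentalDomain_Ioc one_pos 0).measure_set_eq
    (isAddFundamentalDomain_Ioc one_pos (e - 1)) measurableSet_circleArc hper
  rw [zero_add, sub_add_cancel] at this
  rw [measureReal_restrict_apply measurableSet_circleArc, measureReal_def, this,
    circleArc_inter_Ioc hr₁, Real.volume_Ioc, sub_sub_cancel, ENNReal.toReal_ofReal hr₀]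

end CircleArc

section ArcEnd

open Set MeasureTheory

variable {X : Type*} [Fintype X] [PartialOrder X] [DecidableRel (· ≤ · : X → X → Prop)]
  (π : Finset X → ℝ) (ρ : X → ℝ)

-- `∑ w ∈ C with z ≤ w, ρ w - ρ z` is the mass of the elements of `C` strictly above `z`.
open Classical in
noncomputable def arcEnd (z : X) : ℝ :=
  (insert 0 ((Finset.univ.filter fun C : Finset X => IsMaxChain (· ≤ ·) (C : Set X) ∧ z ∈ C).image
    fun C => π C - ∑ w ∈ C with z ≤ w, ρ w + ρ z)).max' (Finset.insert_nonempty _ _)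

def coveredSet (x : X) (U : Finset X) : Set ℝ :=
  Ioc 0 (arcEnd π ρ x) ∪ ⋃ z ∈ U, circleArc (arcEnd π ρ z) (ρ z)

variable {π ρ}

theorem arcEnd_nonneg (z : X) : 0 ≤ arcEnd π ρ z :=
  Finset.le_max' _ _ (Finset.mem_insert_self _ _)

theorem le_arcEnd {C : Finset X} (hC : IsMaxChain (· ≤ ·) (C : Set X)) {z : X} (hz : z ∈ C) :
    π C - ∑ w ∈ C with z ≤ w, ρ w + ρ z ≤ arcEnd π ρ z := by
  unfold arcEnd
  apply Finset.le_max'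
  exact Finset.mem_insert_of_mem (Finset.mem_image.mpr ⟨C, by simp [hC, hz], rfl⟩)

theorem arcEnd_le {z : X} {b : ℝ} (hb : 0 ≤ b)
    (h : ∀ C : Finset X, IsMaxChain (· ≤ ·) (C : Set X) → z ∈ C →
      π C - ∑ w ∈ C with z ≤ w, ρ w + ρ z ≤ b) :
    arcEnd π ρ z ≤ b := by
  refine Finset.max'_le _ _ _ fun a ha => ?_
  simp only [Finset.mem_insert, Finset.mem_image, Finset.mem_filter, Finset.mem_univ,
    true_and] at ha
  obtain rfl | ⟨C, ⟨hC, hz⟩, rfl⟩ := ha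
  exacts [hb, h C hC hz]

theorem exists_arcEnd_eq {z : X} (h : 0 < arcEnd π ρ z) :
    ∃ C : Finset X, IsMaxChain (· ≤ ·) (C : Set X) ∧ z ∈ C ∧
      arcEnd π ρ z = π C - ∑ w ∈ C with z ≤ w, ρ w + ρ z := by
  have hmem : arcEnd π ρ z ∈ _ := Finset.max'_mem _ _
  simp only [Finset.mem_insert, Finset.mem_image, Finset.mem_filter, Finset.mem_univ,
    true_and] at hmem
  obtain h0 | ⟨C, ⟨hC, hz⟩, hE⟩ := hmem
  exacts [absurd h0 h.ne', ⟨C, hC, hz, hE.symm⟩]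

theorem arcEnd_le_of_isLeast (hρ₀ : ∀ x, 0 ≤ ρ x)
    (hnec : ∀ C : Finset X, IsMaxChain (· ≤ ·) (C : Set X) → π C ≤ ∑ x ∈ C, ρ x)
    {C : Finset X} (hC : IsMaxChain (· ≤ ·) (C : Set X)) {m : X} (hm : IsLeast (C : Set X) m) :
    arcEnd π ρ m ≤ ρ m := by
  refine arcEnd_le (hρ₀ m) fun D hD hmD => ?_
  have hDtail : D.filter (m ≤ ·) = D := by
    refine Finset.filter_true_of_mem fun w hw => (hD.1.total hmD hw).elim id fun hwm => ?_
    exact hm.2 (hC.mem_of_forall_total fun a ha => Or.inl (hwm.trans (hm.2 ha)))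
  rw [hDtail]
  linarith [hnec D hD]

theorem coveredSet_subset_biUnion_circleArc (hρ₀ : ∀ x, 0 ≤ ρ x) (hρ₁ : ∀ x, ρ x ≤ 1)
    (hnec : ∀ C : Finset X, IsMaxChain (· ≤ ·) (C : Set X) → π C ≤ ∑ x ∈ C, ρ x)
    {C : Finset X} (hC : IsMaxChain (· ≤ ·) (C : Set X)) {m : X} (hm : IsLeast (C : Set X) m) :
    coveredSet π ρ m C ⊆ ⋃ z ∈ C, circleArc (arcEnd π ρ z) (ρ z) := by
  refine union_subset (fun u hu => mem_biUnion hm.1 (Ioc_subset_circleArc (hρ₁ m) ?_)) subset_rfl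
  exact Ioc_subset_Ioc_left (by linarith [arcEnd_le_of_isLeast hρ₀ hnec hC hm]) hu

theorem coveredSet_subset_union {x y : X} {U V : Finset X} (hy : y ∈ U) (hVU : V ⊆ U)
    (hρy : ρ y ≤ 1) :
    coveredSet π ρ y V ⊆ coveredSet π ρ x U ∪ Ioc (arcEnd π ρ x) (arcEnd π ρ y - ρ y) := by
  rintro u (⟨hu₀, huy⟩ | hu)
  · by_cases hux : u ≤ arcEnd π ρ x
    · exact Or.inl (Or.inl ⟨hu₀, hux⟩)
    by_cases hu : u ≤ arcEnd π ρ y - ρ y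
    · exact Or.inr ⟨not_le.mp hux, hu⟩
    · exact Or.inl (Or.inr (mem_biUnion hy (Ioc_subset_circleArc hρy ⟨not_le.mp hu, huy⟩)))
  · exact Or.inl (Or.inr (biUnion_subset_biUnion_left (Finset.coe_subset.mpr hVU) hu))

theorem measureReal_coveredSet_le {x y : X} {U V : Finset X} (hy : y ∈ U) (hVU : V ⊆ U)
    (hρy : ρ y ≤ 1) :
    (volume.restrict (Ioc (0 : ℝ) 1)).real (coveredSet π ρ y V) ≤
      (volume.restrict (Ioc (0 : ℝ) 1)).real (coveredSet π ρ x U) +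
        max (arcEnd π ρ y - ρ y - arcEnd π ρ x) 0 := by
  set μ := volume.restrict (Ioc (0 : ℝ) 1)
  have hgap : μ.real (Ioc (arcEnd π ρ x) (arcEnd π ρ y - ρ y)) ≤
      max (arcEnd π ρ y - ρ y - arcEnd π ρ x) 0 := by
    rw [measureReal_restrict_apply measurableSet_Ioc, ← Real.volume_real_Ioc]
    exact measureReal_mono inter_subset_left measure_Ioc_lt_top.ne
  calc μ.real (coveredSet π ρ y V)
      ≤ μ.real (coveredSet π ρ x U ∪ Ioc (arcEnd π ρ x) (arcEnd π ρ y - ρ y)) :=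
        measureReal_mono (coveredSet_subset_union hy hVU hρy)
    _ ≤ μ.real (coveredSet π ρ x U) + μ.real (Ioc (arcEnd π ρ x) (arcEnd π ρ y - ρ y)) :=
        measureReal_union_le _ _
    _ ≤ _ := by gcongr

theorem min_one_arcEnd_le (x : X) (U : Finset X) :
    min 1 (arcEnd π ρ x) ≤ (volume.restrict (Ioc (0 : ℝ) 1)).real (coveredSet π ρ x U) :=
  calc min 1 (arcEnd π ρ x)
      = (volume.restrict (Ioc (0 : ℝ) 1)).real (Ioc 0 (arcEnd π ρ x)) := by
        rw [measureReal_restrict_apply measurableSet_Ioc, Set.Ioc_inter_Ioc, max_self,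
          Real.volume_real_Ioc_of_le (le_min (arcEnd_nonneg x) zero_le_one), sub_zero, min_comm]
    _ ≤ _ := measureReal_mono subset_union_left

variable [DecidableEq X]

theorem exists_recombine_le (hcons : ConservationLaw π) {x y : X} {C : Finset X}
    (hC : IsMaxChain (· ≤ ·) (C : Set X)) (hxC : x ∈ C) (hyC : y ∈ C) (hxy : x < y)
    (hsucc : ∀ z ∈ C, x < z → y ≤ z) (hy : 0 < arcEnd π ρ y) :
    ∃ A : Finset X, IsMaxChain (· ≤ ·) (A : Set X) ∧ y ∈ A ∧
      A.filter (y ≤ ·) = C.filter (y ≤ ·) ∧ π C ≤ π A + arcEnd π ρ x + ρ y - arcEnd π ρ y := by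
  obtain ⟨D, hD, hyD, hEy⟩ := exists_arcEnd_eq hy
  have hxB : x ∈ recombine C D y :=
    Finset.mem_union_left _ (Finset.mem_filter.mpr ⟨hxC, hxy.le⟩)
  have hBx := le_arcEnd (π := π) (ρ := ρ) (hC.recombine hD hyC hyD) hxB
  rw [filter_ge_recombine_of_succ hxC hyD hxy hsucc,
    Finset.sum_insert fun h => hxy.not_ge (Finset.mem_filter.mp h).2] at hBx
  have := hcons D C hD hC y (Finset.mem_inter.mpr ⟨hyD, hyC⟩)
  exact ⟨_, hD.recombine hC hyD hyC, Finset.mem_union_left _ (Finset.mem_filter.mpr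
    ⟨hyD, le_rfl⟩), filter_ge_recombine hyC, by linarith⟩

theorem le_measureReal_coveredSet (hρ₀ : ∀ x, 0 ≤ ρ x) (hρ₁ : ∀ x, ρ x ≤ 1)
    (hπ₁ : ∀ C : Finset X, IsMaxChain (· ≤ ·) (C : Set X) → π C ≤ 1) (hcons : ConservationLaw π)
    (x : X) {C : Finset X} (hC : IsMaxChain (· ≤ ·) (C : Set X)) (hxC : x ∈ C) :
    π C ≤ (volume.restrict (Ioc (0 : ℝ) 1)).real (coveredSet π ρ x (C.filter (x ≤ ·))) := by
  induction x using WellFoundedGT.induction generalizing C with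
  | _ x ih =>
  by_cases hlast : ∃ z ∈ C, x < z
  · obtain ⟨y, ⟨hyC, hxy⟩, hsucc⟩ := (hC.1.mono (sep_subset _ _)).exists_isLeast
      (s := {z ∈ (C : Set X) | x < z}) hlast
    have hcov := measureReal_coveredSet_le (π := π) (x := x)
      (Finset.mem_filter.mpr ⟨hyC, hxy.le⟩)
      (Finset.monotone_filter_right C fun _ _ => hxy.le.trans) (hρ₁ y)
    rcases le_or_gt (arcEnd π ρ y - ρ y) (arcEnd π ρ x) with hoverlap | hgap
    · have := ih y hxy hC hyC
      rw [max_eq_right (by linarith)] at hcov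
      linarith
    · obtain ⟨A, hA, hyA, hAtail, hπA⟩ := exists_recombine_le hcons hC hxC hyC hxy
        (fun z hz hxz => hsucc ⟨hz, hxz⟩) (by linarith [arcEnd_nonneg (π := π) (ρ := ρ) x, hρ₀ y])
      have := ih y hxy hA hyA
      rw [hAtail] at this
      rw [max_eq_left (by linarith)] at hcov
      linarith
  · push Not at hlast
    have htail : C.filter (x ≤ ·) = {x} := by
      ext z
      simp only [Finset.mem_filter, Finset.mem_singleton]
      exact ⟨fun ⟨hz, hxz⟩ => (hxz.eq_or_lt.resolve_right (hlast z hz)).symm,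
        by rintro rfl; exact ⟨hxC, le_rfl⟩⟩
    have hx := le_arcEnd (π := π) (ρ := ρ) hC hxC
    rw [htail, Finset.sum_singleton] at hx
    rw [htail]
    exact (le_min (hπ₁ C hC) (by linarith)).trans (min_one_arcEnd_le x {x})

end ArcEnd

section RandomSet

open Set MeasureTheory

variable {X : Type*} [Fintype X] [PartialOrder X] [DecidableRel (· ≤ · : X → X → Prop)]
  (π : Finset X → ℝ) (ρ : X → ℝ)

open Classical in
noncomputable def randomSet (u : ℝ) : Finset X :=
  Finset.univ.filter fun z => u ∈ circleArc (arcEnd π ρ z) (ρ z)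

variable {π ρ}

theorem measurableSet_randomSet_preimage (S : Finset X) :
    MeasurableSet (randomSet π ρ ⁻¹' {S}) := by
  have : randomSet π ρ ⁻¹' {S} = ⋂ z, {u | u ∈ circleArc (arcEnd π ρ z) (ρ z) ↔ z ∈ S} := by
    ext u
    simp [randomSet, Finset.ext_iff]
  rw [this]
  exact MeasurableSet.iInter fun z => measurableSet_setOfPred.mpr
    ((measurableSet_setOfPred.mp measurableSet_circleArc).iff measurable_const)

variable [DecidableEq X]

theorem randomSet_preimage_mem (x : X) :
    randomSet π ρ ⁻¹' ↑(Finset.univ.filter fun S : Finset X => x ∈ S) =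
      circleArc (arcEnd π ρ x) (ρ x) := by
  ext u
  simp [randomSet]

theorem randomSet_preimage_inter_nonempty (C : Finset X) :
    randomSet π ρ ⁻¹' ↑(Finset.univ.filter fun S : Finset X => (S ∩ C).Nonempty) =
      ⋃ z ∈ C, circleArc (arcEnd π ρ z) (ρ z) := by
  ext u
  simp [randomSet, Finset.Nonempty, and_comm]

end RandomSet

open Finset

theorem exists_distribution_on_poset_general (X : Type*) [Fintype X] [DecidableEq X]
    [PartialOrder X] [DecidableRel (· ≤ · : X → X → Prop)]
    (ρ : X → ℝ) (hρ0 : ∀ x, 0 ≤ ρ x) (hρ1 : ∀ x, ρ x ≤ 1)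
    (π : Finset X → ℝ)
    (hπ1 : ∀ C : Finset X, IsMaxChain (· ≤ ·) (C : Set X) → π C ≤ 1)
    (hnec : ∀ C : Finset X, IsMaxChain (· ≤ ·) (C : Set X) → π C ≤ ∑ x ∈ C, ρ x)
    (hcons : ∀ C1 C2 : Finset X, IsMaxChain (· ≤ ·) (C1 : Set X) →
      IsMaxChain (· ≤ ·) (C2 : Set X) → ∀ x ∈ C1 ∩ C2,
      π C1 + π C2 =
        π (C1.filter (· ≤ x) ∪ C2.filter (x ≤ ·)) +
        π (C2.filter (· ≤ x) ∪ C1.filter (x ≤ ·))) :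
    ∃ σ : Finset X → ℝ,
      (∀ S, 0 ≤ σ S) ∧
      (∑ S : Finset X, σ S = 1) ∧
      (∀ x : X, ∑ S ∈ univ.filter (fun S : Finset X => x ∈ S), σ S = ρ x) ∧
      (∀ C : Finset X, IsMaxChain (· ≤ ·) (C : Set X) →
        π C ≤ ∑ S ∈ univ.filter (fun S : Finset X => (S ∩ C).Nonempty), σ S) := by
  open Set MeasureTheory in
  set μ := volume.restrict (Ioc (0 : ℝ) 1)
  have hsum (𝒮 : Finset (Finset X)) :
      ∑ S ∈ 𝒮, μ.real (randomSet π ρ ⁻¹' {S}) = μ.real (randomSet π ρ ⁻¹' 𝒮) :=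
    sum_measureReal_preimage_singleton 𝒮 fun S _ => measurableSet_randomSet_preimage S
  refine ⟨fun S => μ.real (randomSet π ρ ⁻¹' {S}), fun S => measureReal_nonneg, ?_,
    fun x => ?_, fun C hC => ?_⟩
  · rw [hsum, coe_univ, preimage_univ, measureReal_restrict_apply_univ,
      Real.volume_real_Ioc_of_le zero_le_one, sub_zero]
  · rw [hsum, randomSet_preimage_mem, measureReal_circleArc (hρ0 x) (hρ1 x)]
  · rw [hsum, randomSet_preimage_inter_nonempty]
    obtain rfl | hne := C.eq_empty_or_nonempty
    · simpa using hnec ∅ hC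
    obtain ⟨m, hm⟩ := hC.1.exists_isLeast hne
    have hCtail : C.filter (m ≤ ·) = C := filter_true_of_mem fun _ hw => hm.2 hw
    calc π C ≤ μ.real (coveredSet π ρ m C) := by
          simpa only [hCtail] using le_measureReal_coveredSet hρ0 hρ1 hπ1 hcons m hC hm.1
      _ ≤ _ := measureReal_mono (coveredSet_subset_biUnion_circleArc hρ0 hρ1 hnec hC hm)
          (measure_ne_top _ _)

/-- Main existence theorem (Theorem 1): on a finite nonempty poset with maximal chains `𝒞`,
if `ρ ∈ [0,1]^X` and `π ≤ 1` satisfy `∑_{x∈C} ρ_x ≥ π_C` for every maximal chain `C` and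
the conservation law on recombinations of intersecting maximal chains, then there exists a
probability distribution `σ` over subsets of `X` with marginals `ρ` and hitting
probabilities at least `π` on every maximal chain. -/
theorem exists_distribution_on_poset (X : Type*) [Fintype X] [Nonempty X] [DecidableEq X]
    [PartialOrder X] [DecidableRel (· ≤ · : X → X → Prop)]
    (ρ : X → ℝ) (hρ0 : ∀ x, 0 ≤ ρ x) (hρ1 : ∀ x, ρ x ≤ 1)
    (π : Finset X → ℝ)
    (hπ1 : ∀ C : Finset X, IsMaxChain (· ≤ ·) (C : Set X) → π C ≤ 1)
    (hnec : ∀ C : Finset X, IsMaxChain (· ≤ ·) (C : Set X) → π C ≤ ∑ x ∈ C, ρ x)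
    (hcons : ∀ C1 C2 : Finset X, IsMaxChain (· ≤ ·) (C1 : Set X) →
      IsMaxChain (· ≤ ·) (C2 : Set X) → ∀ x ∈ C1 ∩ C2,
      π C1 + π C2 =
        π (C1.filter (· ≤ x) ∪ C2.filter (x ≤ ·)) +
        π (C2.filter (· ≤ x) ∪ C1.filter (x ≤ ·))) :
    ∃ σ : Finset X → ℝ,
      (∀ S, 0 ≤ σ S) ∧
      (∑ S : Finset X, σ S = 1) ∧
      (∀ x : X, ∑ S ∈ univ.filter (fun S : Finset X => x ∈ S), σ S = ρ x) ∧
      (∀ C : Finset X, IsMaxChain (· ≤ ·) (C : Set X) →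
        π C ≤ ∑ S ∈ univ.filter (fun S : Finset X => (S ∩ C).Nonempty), σ S) :=
  exists_distribution_on_poset_general X ρ hρ0 hρ1 π hπ1 hnec hcons
end

section
/- Under the hypotheses of the previous statement, the optimal value of the LP minimizing ∑_S σ_S subject to σ ≥ 0, ∑_{S∋x} σ_S = ρ_x for all x ∈ X, and ∑_{S:|S∩C|≥2} σ_S(|S∩C|−1) ≤ ∑_{x∈C} ρ_x − π_C for all maximal chains C, equals max{max_{x∈X} ρ_x, max_{C∈𝒞} π_C}. -/
/-!
Let `v` be the claimed value. A feasible `σ` has mass at least `ρ x` (marginal constraint at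
`x`) and at least `π C` (the excess constraint at `C` bounds from below the mass of the sets
meeting `C`), and `v` is one of these numbers.

An optimal `σ` comes from arcs: `x` gets the interval `[a x, a x + ρ x) ⊆ [0, v)`, and `σ S` is
the length of the set of `t ∈ [0, v)` lying in the arcs of exactly the elements of `S`. Its
marginals are `ρ`, its mass is `v`, and its excess constraint at `C` says that the arcs of `C`
cover length at least `π C`. Here `a x = max 0 (B x - ρ x)`, where `B x` is the largest value of
`π C` minus the `ρ`-weight of `C` above `x` over maximal chains `C ∋ x`. Walking up a maximal
chain `C`, the same maximum over the maximal chains sharing the prefix of `C` up to `x`, minus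
`min (ρ x) (B x)`, stays below the length covered under `a x` by the arcs of the earlier
elements: a step from `y` up to `x` loses at most `ρ x`, and the conservation law, applied to
the two recombinations at `y` of chains realising these maxima, bounds it by `B x - B y`.
-/

open Finset MeasureTheory

section MaxChain

variable {α : Type*}

theorem IsMaxChain.mem_of_forall_le_or_ge [Preorder α] {s : Set α} {a : α}
    (hs : IsMaxChain (· ≤ ·) s) (h : ∀ b ∈ s, a ≤ b ∨ b ≤ a) : a ∈ s :=
  (Flag.ofIsMaxChain s hs).mem_iff_forall_le_or_ge.2 h

theorem isMaxChain_of_forall_le_or_ge [Preorder α] {s : Set α} (hs : IsChain (· ≤ ·) s)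
    (h : ∀ a, (∀ b ∈ s, a ≤ b ∨ b ≤ a) → a ∈ s) : IsMaxChain (· ≤ ·) s :=
  ⟨hs, fun _ ht hst => hst.antisymm fun a ha => h a fun _ hb => ht.total ha (hst hb)⟩

theorem IsMaxChain.sep_le_union_sep_ge [PartialOrder α] {s t : Set α} {x : α}
    (hs : IsMaxChain (· ≤ ·) s) (ht : IsMaxChain (· ≤ ·) t) (hxs : x ∈ s) (hxt : x ∈ t) :
    IsMaxChain (· ≤ ·) ({z ∈ s | z ≤ x} ∪ {z ∈ t | x ≤ z}) := by
  refine isMaxChain_of_forall_le_or_ge ?_ fun a ha => ?_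
  · rintro a (⟨has, hax⟩ | ⟨hat, hxa⟩) b (⟨hbs, hbx⟩ | ⟨hbt, hxb⟩) -
    · exact hs.isChain.total has hbs
    · exact Or.inl (hax.trans hxb)
    · exact Or.inr (hbx.trans hxa)
    · exact ht.isChain.total hat hbt
  rcases ha x (Or.inl ⟨hxs, le_rfl⟩) with hax | hxa
  · refine Or.inl ⟨hs.mem_of_forall_le_or_ge fun b hb => ?_, hax⟩
    rcases hs.isChain.total hb hxs with hbx | hxb
    · exact ha b (Or.inl ⟨hb, hbx⟩)
    · exact Or.inl (hax.trans hxb)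
  · refine Or.inr ⟨ht.mem_of_forall_le_or_ge fun b hb => ?_, hxa⟩
    rcases ht.isChain.total hb hxt with hbx | hxb
    · exact Or.inr (hbx.trans hxa)
    · exact ha b (Or.inr ⟨hb, hxb⟩)

variable [PartialOrder α]

theorem exists_isMaxChain_mem [Finite α] (x : α) :
    ∃ C : Finset α, IsMaxChain (· ≤ ·) (C : Set α) ∧ x ∈ C := by
  obtain ⟨M, hM, hxM⟩ := (IsChain.singleton (r := (· ≤ · : α → α → Prop)) (a := x)).exists_maxChain
  exact ⟨M.toFinite.toFinset, by simpa using hM, by simpa using hxM rfl⟩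

variable [DecidableRel (· ≤ · : α → α → Prop)]

theorem filter_le_eq_of_filter_le_eq {s t : Finset α} {x y : α}
    (h : s.filter (· ≤ x) = t.filter (· ≤ x)) (hyx : y ≤ x) :
    s.filter (· ≤ y) = t.filter (· ≤ y) := by
  have key (u : Finset α) : u.filter (· ≤ y) = (u.filter (· ≤ x)).filter (· ≤ y) := by
    rw [filter_filter]
    exact filter_congr fun z _ => ⟨fun hzy => ⟨hzy.trans hyx, hzy⟩, And.right⟩
  rw [key s, key t, h]

theorem mem_of_filter_le_eq {s t : Finset α} {x : α} (hxt : x ∈ t)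
    (h : s.filter (· ≤ x) = t.filter (· ≤ x)) : x ∈ s := by
  have : x ∈ s.filter (· ≤ x) := h ▸ mem_filter.2 ⟨hxt, le_rfl⟩
  exact (mem_filter.1 this).1

theorem filter_le_eq_singleton {C : Finset α} {x : α} (hx : x ∈ C)
    (hbelow : ∀ y ∈ C, ¬ y < x) : C.filter (· ≤ x) = {x} := by
  ext z
  simp only [mem_filter, mem_singleton]
  exact ⟨fun ⟨hz, hzx⟩ => eq_of_le_of_not_lt hzx (hbelow z hz), by rintro rfl; exact ⟨hx, le_rfl⟩⟩

variable [DecidableEq α]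

theorem IsChain.exists_pred {C : Finset α} (hC : IsChain (· ≤ ·) (C : Set α)) {x : α}
    (hx : x ∈ C) (hbelow : ∃ y ∈ C, y < x) :
    ∃ y ∈ C, y < x ∧ C.filter (· ≤ x) = insert x (C.filter (· ≤ y)) ∧
      (C : Set α) ∩ Set.Iio x = insert y ((C : Set α) ∩ Set.Iio y) := by
  obtain ⟨y, ⟨hyC, hyx⟩, hymax⟩ :=
    (C.finite_toSet.subset fun _ h => h.1 : {y | y ∈ C ∧ y < x}.Finite).exists_maximal hbelow
  have hpred : ∀ z ∈ C, z < x → z ≤ y := fun z hz hzx =>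
    (hC.total hz hyC).elim id (hymax ⟨hz, hzx⟩)
  refine ⟨y, hyC, hyx, ?_, ?_⟩
  · ext z
    simp only [mem_filter, mem_insert]
    constructor
    · rintro ⟨hz, hzx⟩
      rcases hzx.eq_or_lt with rfl | hzx
      exacts [Or.inl rfl, Or.inr ⟨hz, hpred z hz hzx⟩]
    · rintro (rfl | ⟨hz, hzy⟩)
      exacts [⟨hx, le_rfl⟩, ⟨hz, hzy.trans hyx.le⟩]
  · ext z
    simp only [Set.mem_inter_iff, mem_coe, Set.mem_Iio, Set.mem_insert_iff]
    constructor
    · rintro ⟨hz, hzx⟩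
      rcases (hpred z hz hzx).eq_or_lt with rfl | hzy
      exacts [Or.inl rfl, Or.inr ⟨hz, hzy⟩]
    · rintro (rfl | ⟨hz, hzy⟩)
      exacts [⟨hyC, hyx⟩, ⟨hz, hzy.trans hyx⟩]

theorem isMaxChain_filter_le_union_filter_ge {s t : Finset α} {x : α}
    (hs : IsMaxChain (· ≤ ·) (s : Set α)) (ht : IsMaxChain (· ≤ ·) (t : Set α))
    (hxs : x ∈ s) (hxt : x ∈ t) :
    IsMaxChain (· ≤ ·) (↑(s.filter (· ≤ x) ∪ t.filter (x ≤ ·)) : Set α) := by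
  rw [coe_union, coe_filter, coe_filter]
  exact hs.sep_le_union_sep_ge ht hxs hxt

theorem filter_filter_le_union_filter_ge_le {s t : Finset α} {x : α} (hxs : x ∈ s) :
    (s.filter (· ≤ x) ∪ t.filter (x ≤ ·)).filter (· ≤ x) = s.filter (· ≤ x) := by
  ext z
  simp only [mem_filter, mem_union]
  constructor
  · rintro ⟨h | ⟨-, hxz⟩, hzx⟩
    · exact h
    · obtain rfl := le_antisymm hzx hxz
      exact ⟨hxs, le_rfl⟩
  · exact fun h => ⟨Or.inl h, h.2⟩

theorem filter_filter_le_union_filter_ge_not_le {s t : Finset α} {x y : α}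
    (ht : IsChain (· ≤ ·) (t : Set α)) (hyt : y ∈ t) (hyx : y ≤ x) :
    (s.filter (· ≤ y) ∪ t.filter (y ≤ ·)).filter (¬ · ≤ x) = t.filter (¬ · ≤ x) := by
  ext z
  simp only [mem_filter, mem_union]
  constructor
  · rintro ⟨⟨-, hzy⟩ | ⟨hzt, -⟩, hzx⟩
    · exact absurd (hzy.trans hyx) hzx
    · exact ⟨hzt, hzx⟩
  · rintro ⟨hzt, hzx⟩
    refine ⟨Or.inr ⟨hzt, ?_⟩, hzx⟩
    exact (ht.total hzt hyt).resolve_left fun hzy => hzx (hzy.trans hyx)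

end MaxChain

theorem measureReal_inter_Iio_add_sub_le {U : Set ℝ} (hU : volume U ≠ ⊤) {a b c : ℝ}
    (hbc : b ≤ c) :
    volume.real (U ∩ Set.Iio a) + (b - a) ≤ volume.real ((U ∪ Set.Ico a b) ∩ Set.Iio c) := by
  have hfin : volume ((U ∪ Set.Ico a b) ∩ Set.Iio c) ≠ ⊤ :=
    measure_inter_ne_top_of_left_ne_top (measure_union_ne_top hU measure_Ico_lt_top.ne)
  rcases le_total a b with hab | hba
  · have hdisj : Disjoint (U ∩ Set.Iio a) (Set.Ico a b) :=
      Set.disjoint_left.2 fun t ht ht' => (not_lt.2 ht'.1) ht.2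
    have hsub : U ∩ Set.Iio a ∪ Set.Ico a b ⊆ (U ∪ Set.Ico a b) ∩ Set.Iio c := by
      rintro t (⟨htU, hta⟩ | ⟨hat, htb⟩)
      · exact ⟨Or.inl htU, hta.trans_le (hab.trans hbc)⟩
      · exact ⟨Or.inr ⟨hat, htb⟩, htb.trans_le hbc⟩
    calc volume.real (U ∩ Set.Iio a) + (b - a) = volume.real (U ∩ Set.Iio a ∪ Set.Ico a b) := by
          rw [measureReal_union hdisj measurableSet_Ico (measure_inter_ne_top_of_left_ne_top hU)
            measure_Ico_lt_top.ne, Real.volume_real_Ico_of_le hab]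
      _ ≤ _ := measureReal_mono hsub hfin
  · have hsub : U ∩ Set.Iio a ⊆ (U ∪ Set.Ico a b) ∩ Set.Iio c ∪ Set.Ico b a := by
      rintro t ⟨htU, hta⟩
      rcases lt_or_ge t b with htb | hbt
      · exact Or.inl ⟨Or.inl htU, htb.trans_le hbc⟩
      · exact Or.inr ⟨hbt, hta⟩
    have := (measureReal_mono hsub (measure_union_ne_top hfin measure_Ico_lt_top.ne)).trans
      (measureReal_union_le _ _)
    rw [Real.volume_real_Ico_of_le hba] at this
    linarith

section Pattern

variable {X α : Type*} [Fintype X]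

open Classical in
noncomputable def coverPattern (A : X → Set α) (t : α) : Finset X := univ.filter (t ∈ A ·)

theorem mem_coverPattern {A : X → Set α} {t : α} {x : X} : x ∈ coverPattern A t ↔ t ∈ A x := by
  simp [coverPattern]

variable [MeasurableSpace α]

theorem measurableSet_coverPattern_preimage {A : X → Set α} (hA : ∀ x, MeasurableSet (A x))
    (S : Finset X) : MeasurableSet (coverPattern A ⁻¹' {S}) := by
  have : coverPattern A ⁻¹' {S} = ⋂ x, {t | t ∈ A x ↔ x ∈ S} := by
    ext t
    simp [Finset.ext_iff, mem_coverPattern]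
  rw [this]
  refine MeasurableSet.iInter fun x => ?_
  by_cases hx : x ∈ S
  · simp only [hx, iff_true]
    exact hA x
  · simp only [hx, iff_false]
    exact (hA x).compl

theorem sum_measureReal_coverPattern_preimage (μ : Measure α) [IsFiniteMeasure μ]
    {A : X → Set α} (hA : ∀ x, MeasurableSet (A x)) (P : Finset X → Prop) [DecidablePred P] :
    ∑ S ∈ univ.filter P, μ.real (coverPattern A ⁻¹' {S}) = μ.real {t | P (coverPattern A t)} := by
  rw [sum_measureReal_preimage_singleton _ fun S _ => measurableSet_coverPattern_preimage hA S]
  congr 1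
  ext t
  simp

end Pattern

section LinearProgram

variable {X : Type*} [Fintype X] [DecidableEq X]

theorem sum_excess_eq (σ : Finset X → ℝ) (C : Finset X) :
    ∑ S ∈ univ.filter (fun S : Finset X => 2 ≤ (S ∩ C).card), σ S * (((S ∩ C).card : ℝ) - 1) =
      ∑ x ∈ C, ∑ S ∈ univ.filter (fun S : Finset X => x ∈ S), σ S -
        ∑ S ∈ univ.filter (fun S : Finset X => (S ∩ C).Nonempty), σ S := by
  have hcount (S : Finset X) : ∑ x ∈ C, (if x ∈ S then σ S else 0) = σ S * (S ∩ C).card := by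
    rw [← sum_filter, sum_const, nsmul_eq_mul, mul_comm, filter_mem_eq_inter, inter_comm]
  simp_rw [sum_filter]
  rw [sum_comm]
  simp_rw [hcount, ← sum_sub_distrib]
  refine sum_congr rfl fun S _ => ?_
  by_cases hne : (S ∩ C).Nonempty
  · by_cases h2 : 2 ≤ (S ∩ C).card
    · simp only [h2, hne, if_true]
      ring
    · have h1 : (S ∩ C).card = 1 := by have := card_pos.2 hne; omega
      simp [hne, h1]
  · simp [not_nonempty_iff_eq_empty.1 hne]

variable {ρ : X → ℝ} {σ : Finset X → ℝ}

theorem le_sum_of_marginal (hσ : ∀ S, 0 ≤ σ S)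
    (hmarg : ∀ x : X, ∑ S ∈ univ.filter (fun S : Finset X => x ∈ S), σ S = ρ x) (x : X) :
    ρ x ≤ ∑ S : Finset X, σ S :=
  hmarg x ▸ sum_le_sum_of_subset_of_nonneg (filter_subset _ _) fun S _ _ => hσ S

theorem le_sum_of_excess_le (hσ : ∀ S, 0 ≤ σ S)
    (hmarg : ∀ x : X, ∑ S ∈ univ.filter (fun S : Finset X => x ∈ S), σ S = ρ x)
    {C : Finset X} {p : ℝ}
    (hexc : ∑ S ∈ univ.filter (fun S : Finset X => 2 ≤ (S ∩ C).card),
      σ S * (((S ∩ C).card : ℝ) - 1) ≤ (∑ x ∈ C, ρ x) - p) :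
    p ≤ ∑ S : Finset X, σ S := by
  simp_rw [sum_excess_eq, hmarg] at hexc
  have := sum_le_sum_of_subset_of_nonneg
    (filter_subset (fun S : Finset X => (S ∩ C).Nonempty) univ) fun S _ _ => hσ S
  linarith

end LinearProgram

namespace ChainArcs

section Demand

variable {X : Type*} [PartialOrder X] [DecidableRel (· ≤ · : X → X → Prop)]
  (ρ : X → ℝ) (π : Finset X → ℝ)

-- on a chain through `x`, `¬ y ≤ x` means `x < y`
def residual (C : Finset X) (x : X) : ℝ := π C - ∑ y ∈ C with ¬ y ≤ x, ρ y

noncomputable def maxResidual (p : Finset X → Prop) (x : X) : ℝ :=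
  ⨆ C : {C : Finset X // IsMaxChain (· ≤ ·) (C : Set X) ∧ p C}, residual ρ π C x

noncomputable def demand (x : X) : ℝ := maxResidual ρ π (x ∈ ·) x

noncomputable def prefixDemand (C : Finset X) (x : X) : ℝ :=
  maxResidual ρ π (fun D => D.filter (· ≤ x) = C.filter (· ≤ x)) x

-- `max 0 (demand x - ρ x)`, written so that `demand - arcStart = min ρ demand`
noncomputable def arcStart (x : X) : ℝ := demand ρ π x - min (ρ x) (demand ρ π x)

noncomputable def arc (x : X) : Set ℝ := Set.Ico (arcStart ρ π x) (arcStart ρ π x + ρ x)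

variable {ρ π}

theorem residual_eq (C : Finset X) (x : X) :
    residual ρ π C x = π C - ∑ y ∈ C, ρ y + ∑ y ∈ C with y ≤ x, ρ y := by
  rw [residual, ← sum_filter_add_sum_filter_not C (· ≤ x)]
  ring

theorem measurableSet_arc (x : X) : MeasurableSet (arc ρ π x) := measurableSet_Ico

end Demand

variable {X : Type*} [PartialOrder X] (ρ : X → ℝ) (π : Finset X → ℝ)

noncomputable def optValue : ℝ :=
  max (⨆ x, ρ x) (⨆ C : {C : Finset X // IsMaxChain (· ≤ ·) (C : Set X)}, π C)

def ConservationLaw [DecidableEq X] [DecidableRel (· ≤ · : X → X → Prop)] : Prop :=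
  ∀ C1 C2 : Finset X, IsMaxChain (· ≤ ·) (C1 : Set X) → IsMaxChain (· ≤ ·) (C2 : Set X) →
    ∀ x ∈ C1 ∩ C2, π C1 + π C2 =
      π (C1.filter (· ≤ x) ∪ C2.filter (x ≤ ·)) + π (C2.filter (· ≤ x) ∪ C1.filter (x ≤ ·))

variable {ρ π} [Fintype X]

theorem le_optValue (x : X) : ρ x ≤ optValue ρ π :=
  (le_ciSup (Finite.bddAbove_range ρ) x).trans (le_max_left _ _)

theorem le_optValue_of_isMaxChain {C : Finset X} (hC : IsMaxChain (· ≤ ·) (C : Set X)) :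
    π C ≤ optValue ρ π :=
  (le_ciSup (f := fun C : {C : Finset X // IsMaxChain (· ≤ ·) (C : Set X)} => π C)
    (Finite.bddAbove_range _) ⟨C, hC⟩).trans (le_max_right _ _)

theorem optValue_eq [Nonempty X] :
    (∃ x, optValue ρ π = ρ x) ∨
      ∃ C : Finset X, IsMaxChain (· ≤ ·) (C : Set X) ∧ optValue ρ π = π C := by
  obtain ⟨x, hx⟩ := exists_eq_ciSup_of_finite (f := ρ)
  have : Nonempty {C : Finset X // IsMaxChain (· ≤ ·) (C : Set X)} :=
    let ⟨C, hC, _⟩ := exists_isMaxChain_mem (Classical.arbitrary X); ⟨⟨C, hC⟩⟩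
  obtain ⟨⟨C, hC⟩, hCv⟩ :=
    exists_eq_ciSup_of_finite (f := fun C : {C : Finset X // IsMaxChain (· ≤ ·) (C : Set X)} => π C)
  rcases max_choice (⨆ x, ρ x) (⨆ C : {C : Finset X // IsMaxChain (· ≤ ·) (C : Set X)}, π C)
    with h | h
  · exact Or.inl ⟨x, by rw [optValue, h, hx]⟩
  · exact Or.inr ⟨C, hC, by rw [optValue, h, ← hCv]⟩

theorem optValue_nonneg [Nonempty X] (hρ : ∀ x, 0 ≤ ρ x) : 0 ≤ optValue ρ π :=
  (hρ (Classical.arbitrary X)).trans (le_optValue _)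

variable [DecidableRel (· ≤ · : X → X → Prop)]

theorem residual_le_maxResidual {p : Finset X → Prop} {C : Finset X}
    (hC : IsMaxChain (· ≤ ·) (C : Set X)) (hp : p C) (x : X) :
    residual ρ π C x ≤ maxResidual ρ π p x :=
  le_ciSup (f := fun C : {C : Finset X // IsMaxChain (· ≤ ·) (C : Set X) ∧ p C} =>
    residual ρ π C x) (Finite.bddAbove_range _) ⟨C, hC, hp⟩

theorem exists_maxResidual_eq {p : Finset X → Prop}
    (h : ∃ C : Finset X, IsMaxChain (· ≤ ·) (C : Set X) ∧ p C) (x : X) :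
    ∃ C : Finset X, IsMaxChain (· ≤ ·) (C : Set X) ∧ p C ∧
      maxResidual ρ π p x = residual ρ π C x := by
  obtain ⟨C, hC, hp⟩ := h
  have : Nonempty {C : Finset X // IsMaxChain (· ≤ ·) (C : Set X) ∧ p C} := ⟨⟨C, hC, hp⟩⟩
  obtain ⟨⟨D, hD, hpD⟩, hDeq⟩ :=
    exists_eq_ciSup_of_finite
      (f := fun C : {C : Finset X // IsMaxChain (· ≤ ·) (C : Set X) ∧ p C} => residual ρ π C x)
  exact ⟨D, hD, hpD, hDeq.symm⟩

theorem residual_le_demand {C : Finset X} (hC : IsMaxChain (· ≤ ·) (C : Set X)) {x : X}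
    (hx : x ∈ C) : residual ρ π C x ≤ demand ρ π x :=
  residual_le_maxResidual (p := (x ∈ ·)) hC hx x

theorem exists_demand_eq (x : X) :
    ∃ C : Finset X, IsMaxChain (· ≤ ·) (C : Set X) ∧ x ∈ C ∧ demand ρ π x = residual ρ π C x :=
  exists_maxResidual_eq (p := (x ∈ ·)) (exists_isMaxChain_mem x) x

theorem residual_le_prefixDemand {C D : Finset X} (hD : IsMaxChain (· ≤ ·) (D : Set X)) {x : X}
    (hDC : D.filter (· ≤ x) = C.filter (· ≤ x)) :
    residual ρ π D x ≤ prefixDemand ρ π C x :=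
  residual_le_maxResidual (p := fun D => D.filter (· ≤ x) = C.filter (· ≤ x)) hD hDC x

theorem exists_prefixDemand_eq {C : Finset X} (hC : IsMaxChain (· ≤ ·) (C : Set X)) (x : X) :
    ∃ D : Finset X, IsMaxChain (· ≤ ·) (D : Set X) ∧ D.filter (· ≤ x) = C.filter (· ≤ x) ∧
      prefixDemand ρ π C x = residual ρ π D x :=
  exists_maxResidual_eq (p := fun D => D.filter (· ≤ x) = C.filter (· ≤ x)) ⟨C, hC, rfl⟩ x

theorem prefixDemand_le_demand {C : Finset X} (hC : IsMaxChain (· ≤ ·) (C : Set X)) {x : X}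
    (hx : x ∈ C) : prefixDemand ρ π C x ≤ demand ρ π x := by
  obtain ⟨D, hD, hDC, hval⟩ := exists_prefixDemand_eq (ρ := ρ) (π := π) hC x
  rw [hval]
  exact residual_le_demand hD (mem_of_filter_le_eq hx hDC)

theorem prefixDemand_le_of_filter_le_eq_singleton
    (hnec : ∀ C : Finset X, IsMaxChain (· ≤ ·) (C : Set X) → π C ≤ ∑ x ∈ C, ρ x)
    {C : Finset X} (hC : IsMaxChain (· ≤ ·) (C : Set X)) {x : X}
    (hbot : C.filter (· ≤ x) = {x}) : prefixDemand ρ π C x ≤ ρ x := by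
  obtain ⟨D, hD, hDC, hval⟩ := exists_prefixDemand_eq (ρ := ρ) (π := π) hC x
  rw [hval, residual_eq, hDC, hbot, sum_singleton]
  linarith [hnec D hD]

theorem demand_le_optValue (hρ : ∀ x, 0 ≤ ρ x) (x : X) : demand ρ π x ≤ optValue ρ π := by
  obtain ⟨C, hC, -, hval⟩ := exists_demand_eq (ρ := ρ) (π := π) x
  have := sum_nonneg fun y (_ : y ∈ C.filter (¬ · ≤ x)) => hρ y
  rw [hval, residual]
  linarith [le_optValue_of_isMaxChain (ρ := ρ) (π := π) hC]

theorem arc_subset (hρ : ∀ x, 0 ≤ ρ x) (x : X) : arc ρ π x ⊆ Set.Ico 0 (optValue ρ π) := by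
  refine Set.Ico_subset_Ico (sub_nonneg.2 (min_le_right _ _)) ?_
  have := demand_le_optValue (π := π) hρ x
  have := le_optValue (ρ := ρ) (π := π) x
  rw [arcStart]
  rcases min_cases (ρ x) (demand ρ π x) with ⟨h, -⟩ | ⟨h, -⟩ <;> rw [h] <;> linarith

theorem volume_biUnion_arc_ne_top (hρ : ∀ x, 0 ≤ ρ x) (s : Set X) :
    volume (⋃ x ∈ s, arc ρ π x) ≠ ⊤ :=
  measure_ne_top_of_subset (Set.iUnion₂_subset fun x _ => arc_subset hρ x) measure_Ico_lt_top.ne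

variable (ρ π) in
noncomputable def arcSolution (S : Finset X) : ℝ :=
  (volume.restrict (Set.Ico 0 (optValue ρ π))).real (coverPattern (arc ρ π) ⁻¹' {S})

theorem sum_arcSolution_filter (P : Finset X → Prop) [DecidablePred P] :
    ∑ S ∈ univ.filter P, arcSolution ρ π S =
      (volume.restrict (Set.Ico 0 (optValue ρ π))).real {t | P (coverPattern (arc ρ π) t)} :=
  sum_measureReal_coverPattern_preimage _ measurableSet_arc P

theorem sum_arcSolution [Nonempty X] (hρ : ∀ x, 0 ≤ ρ x) :
    ∑ S, arcSolution ρ π S = optValue ρ π := by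
  have := sum_arcSolution_filter (ρ := ρ) (π := π) (fun _ => True)
  rw [filter_true_of_mem fun _ _ => trivial] at this
  rw [this, Set.ofPred_true, measureReal_restrict_apply_univ,
    Real.volume_real_Ico_of_le (optValue_nonneg hρ), sub_zero]

variable [DecidableEq X]

theorem prefixDemand_sub_le {C : Finset X} (hC : IsMaxChain (· ≤ ·) (C : Set X)) {x y : X}
    (hyx : y < x) (hstep : C.filter (· ≤ x) = insert x (C.filter (· ≤ y))) :
    prefixDemand ρ π C x - ρ x ≤ prefixDemand ρ π C y := by
  obtain ⟨D, hD, hDC, hval⟩ := exists_prefixDemand_eq (ρ := ρ) (π := π) hC x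
  have hDy : D.filter (· ≤ y) = C.filter (· ≤ y) := filter_le_eq_of_filter_le_eq hDC hyx.le
  have hx : x ∉ C.filter (· ≤ y) := fun h => hyx.not_ge (mem_filter.1 h).2
  have hres : residual ρ π D x = residual ρ π D y + ρ x := by
    rw [residual_eq, residual_eq, hDC, hstep, hDy, sum_insert hx]
    ring
  have := residual_le_prefixDemand (ρ := ρ) (π := π) hD hDy
  rw [hval, hres] at *
  linarith

theorem prefixDemand_add_demand_le
    (hcons : ConservationLaw π)
    {C : Finset X} (hC : IsMaxChain (· ≤ ·) (C : Set X)) {x y : X} (hx : x ∈ C) (hy : y ∈ C)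
    (hyx : y ≤ x) :
    prefixDemand ρ π C x + demand ρ π y ≤ prefixDemand ρ π C y + demand ρ π x := by
  obtain ⟨Cu, hCu, hCuC, hu⟩ := exists_prefixDemand_eq (ρ := ρ) (π := π) hC x
  obtain ⟨Cb, hCb, hyCb, hb⟩ := exists_demand_eq (ρ := ρ) (π := π) y
  have hxCu : x ∈ Cu := mem_of_filter_le_eq hx hCuC
  have hyCu : y ∈ Cu := by
    have : y ∈ Cu.filter (· ≤ x) := hCuC ▸ mem_filter.2 ⟨hy, hyx⟩
    exact (mem_filter.1 this).1
  set D₁ := Cb.filter (· ≤ y) ∪ Cu.filter (y ≤ ·)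
  set D₂ := Cu.filter (· ≤ y) ∪ Cb.filter (y ≤ ·)
  have h₁ : residual ρ π D₁ x ≤ demand ρ π x :=
    residual_le_demand (isMaxChain_filter_le_union_filter_ge hCb hCu hyCb hyCu)
      (mem_union_right _ (mem_filter.2 ⟨hxCu, hyx⟩))
  have h₂ : residual ρ π D₂ y ≤ prefixDemand ρ π C y := by
    refine residual_le_prefixDemand (isMaxChain_filter_le_union_filter_ge hCu hCb hyCu hyCb) ?_
    rw [filter_filter_le_union_filter_ge_le hyCu]
    exact filter_le_eq_of_filter_le_eq hCuC hyx
  rw [residual, filter_filter_le_union_filter_ge_not_le hCu.isChain hyCu hyx] at h₁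
  rw [residual, filter_filter_le_union_filter_ge_not_le hCb.isChain hyCb le_rfl] at h₂
  have := hcons Cb Cu hCb hCu y (mem_inter.2 ⟨hyCb, hyCu⟩)
  rw [hu, hb]
  unfold residual
  linarith

theorem prefixDemand_sub_min_le (hρ : ∀ x, 0 ≤ ρ x)
    (hcons : ConservationLaw π)
    {C : Finset X} (hC : IsMaxChain (· ≤ ·) (C : Set X)) {x y : X} (hy : y ∈ C) (hyx : y < x)
    (hstep : C.filter (· ≤ x) = insert x (C.filter (· ≤ y))) :
    prefixDemand ρ π C x - min (ρ x) (demand ρ π x) ≤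
      prefixDemand ρ π C y - min (ρ y) (demand ρ π y) +
        (min (arcStart ρ π y + ρ y) (arcStart ρ π x) - arcStart ρ π y) := by
  have hx : x ∈ C := (mem_filter.1 (hstep ▸ mem_insert_self x _)).1
  have h₁ := prefixDemand_sub_le (ρ := ρ) (π := π) hC hyx hstep
  have h₂ := prefixDemand_add_demand_le (ρ := ρ) hcons hC hx hy hyx.le
  have := hρ y
  have := min_le_left (ρ y) (demand ρ π y)
  have := min_le_right (ρ y) (demand ρ π y)
  suffices prefixDemand ρ π C x - min (ρ x) (demand ρ π x) -
      (prefixDemand ρ π C y - min (ρ y) (demand ρ π y)) + arcStart ρ π y ≤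
      min (arcStart ρ π y + ρ y) (arcStart ρ π x) by linarith
  unfold arcStart
  refine le_min ?_ (by linarith)
  rcases min_cases (ρ x) (demand ρ π x) with ⟨h, -⟩ | ⟨h, -⟩ <;> rw [h] <;> linarith

theorem prefixDemand_sub_min_le_volume (hρ : ∀ x, 0 ≤ ρ x)
    (hnec : ∀ C : Finset X, IsMaxChain (· ≤ ·) (C : Set X) → π C ≤ ∑ x ∈ C, ρ x)
    (hcons : ConservationLaw π)
    {C : Finset X} (hC : IsMaxChain (· ≤ ·) (C : Set X)) :
    ∀ x ∈ C, prefixDemand ρ π C x - min (ρ x) (demand ρ π x) ≤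
      volume.real ((⋃ z ∈ (C : Set X) ∩ Set.Iio x, arc ρ π z) ∩ Set.Iio (arcStart ρ π x)) := by
  intro x
  induction x using WellFoundedLT.induction with
  | _ x ih =>
  intro hx
  by_cases hbelow : ∃ y ∈ C, y < x
  · obtain ⟨y, hyC, hyx, hstep, hIio⟩ := hC.isChain.exists_pred hx hbelow
    calc _ ≤ prefixDemand ρ π C y - min (ρ y) (demand ρ π y) +
          (min (arcStart ρ π y + ρ y) (arcStart ρ π x) - arcStart ρ π y) :=
          prefixDemand_sub_min_le hρ hcons hC hyC hyx hstep
      _ ≤ volume.real ((⋃ z ∈ (C : Set X) ∩ Set.Iio y, arc ρ π z) ∩ Set.Iio (arcStart ρ π y)) +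
          (min (arcStart ρ π y + ρ y) (arcStart ρ π x) - arcStart ρ π y) := by
          gcongr
          exact ih y hyx hyC
      _ ≤ volume.real (((⋃ z ∈ (C : Set X) ∩ Set.Iio y, arc ρ π z) ∪
            Set.Ico (arcStart ρ π y) (min (arcStart ρ π y + ρ y) (arcStart ρ π x))) ∩
              Set.Iio (arcStart ρ π x)) :=
          measureReal_inter_Iio_add_sub_le (volume_biUnion_arc_ne_top hρ _) (min_le_right _ _)
      _ ≤ _ := by
          refine measureReal_mono (Set.inter_subset_inter_left _ ?_)
            (measure_inter_ne_top_of_left_ne_top (volume_biUnion_arc_ne_top hρ _))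
          rw [hIio, Set.biUnion_insert]
          exact Set.union_subset Set.subset_union_right
            ((Set.Ico_subset_Ico_right (min_le_left _ _)).trans Set.subset_union_left)
  · push Not at hbelow
    have hbot := filter_le_eq_singleton hx hbelow
    have h₁ := prefixDemand_le_of_filter_le_eq_singleton hnec hC hbot
    have h₂ := prefixDemand_le_demand (ρ := ρ) (π := π) hC hx
    exact (sub_nonpos.2 (le_min h₁ h₂)).trans measureReal_nonneg

theorem le_volume_biUnion_arc (hρ : ∀ x, 0 ≤ ρ x)
    (hnec : ∀ C : Finset X, IsMaxChain (· ≤ ·) (C : Set X) → π C ≤ ∑ x ∈ C, ρ x)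
    (hcons : ConservationLaw π)
    {C : Finset X} (hC : IsMaxChain (· ≤ ·) (C : Set X)) :
    π C ≤ volume.real (⋃ x ∈ C, arc ρ π x) := by
  rcases C.eq_empty_or_nonempty with rfl | hne
  · simpa using hnec ∅ hC
  obtain ⟨t, htC, htmax⟩ := C.exists_maximal hne
  have htop : ∀ z ∈ C, ¬ z ≤ t → False := fun z hz hzt =>
    hzt ((hC.isChain.total hz htC).elim id (htmax hz))
  have hres : residual ρ π C t = π C := by
    rw [residual, filter_false_of_mem htop, sum_empty, sub_zero]
  set U := ⋃ z ∈ (C : Set X) ∩ Set.Iio t, arc ρ π z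
  calc π C = residual ρ π C t := hres.symm
    _ ≤ prefixDemand ρ π C t := residual_le_prefixDemand hC rfl
    _ ≤ volume.real (U ∩ Set.Iio (arcStart ρ π t)) + (arcStart ρ π t + ρ t - arcStart ρ π t) := by
        have := prefixDemand_sub_min_le_volume hρ hnec hcons hC t htC
        have := min_le_left (ρ t) (demand ρ π t)
        linarith
    _ ≤ volume.real ((U ∪ arc ρ π t) ∩ Set.Iio (arcStart ρ π t + ρ t)) :=
        measureReal_inter_Iio_add_sub_le (volume_biUnion_arc_ne_top hρ _) le_rfl
    _ ≤ volume.real (⋃ x ∈ C, arc ρ π x) := by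
        refine measureReal_mono ?_ (volume_biUnion_arc_ne_top hρ C)
        rintro s ⟨hs | hs, -⟩
        · obtain ⟨z, ⟨hz, -⟩, hsz⟩ := Set.mem_iUnion₂.1 hs
          exact Set.mem_biUnion hz hsz
        · exact Set.mem_biUnion htC hs

theorem sum_arcSolution_mem (hρ : ∀ x, 0 ≤ ρ x) (x : X) :
    ∑ S ∈ univ.filter (fun S : Finset X => x ∈ S), arcSolution ρ π S = ρ x := by
  rw [sum_arcSolution_filter]
  simp only [mem_coverPattern, Set.ofPred_mem_eq]
  rw [measureReal_restrict_apply (measurableSet_arc x), Set.inter_eq_left.2 (arc_subset hρ x), arc,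
    Real.volume_real_Ico_of_le (le_add_of_nonneg_right (hρ x)), add_sub_cancel_left]

theorem sum_arcSolution_inter_nonempty (hρ : ∀ x, 0 ≤ ρ x) (C : Finset X) :
    ∑ S ∈ univ.filter (fun S : Finset X => (S ∩ C).Nonempty), arcSolution ρ π S =
      volume.real (⋃ x ∈ C, arc ρ π x) := by
  have : {t | (coverPattern (arc ρ π) t ∩ C).Nonempty} = ⋃ x ∈ C, arc ρ π x := by
    ext t
    simp only [Finset.Nonempty, mem_inter, mem_coverPattern, Set.mem_ofPred_eq, Set.mem_iUnion,
      exists_prop]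
    exact exists_congr fun x => and_comm
  rw [sum_arcSolution_filter, this,
    measureReal_restrict_apply (Finset.measurableSet_biUnion _ fun x _ => measurableSet_arc x),
    Set.inter_eq_left.2 (Set.iUnion₂_subset fun x _ => arc_subset hρ x)]

end ChainArcs

open ChainArcs in
theorem Q_optimal_value_general (X : Type*) [Fintype X] [Nonempty X] [DecidableEq X]
    [PartialOrder X] [DecidableRel (· ≤ · : X → X → Prop)]
    (ρ : X → ℝ) (hρ0 : ∀ x, 0 ≤ ρ x)
    (π : Finset X → ℝ)
    (hnec : ∀ C : Finset X, IsMaxChain (· ≤ ·) (C : Set X) → π C ≤ ∑ x ∈ C, ρ x)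
    (hcons : ∀ C1 C2 : Finset X, IsMaxChain (· ≤ ·) (C1 : Set X) →
      IsMaxChain (· ≤ ·) (C2 : Set X) → ∀ x ∈ C1 ∩ C2,
      π C1 + π C2 =
        π (C1.filter (· ≤ x) ∪ C2.filter (x ≤ ·)) +
        π (C2.filter (· ≤ x) ∪ C1.filter (x ≤ ·))) :
    ∃ σ : Finset X → ℝ,
      -- feasibility of σ for (Q)
      (∀ S, 0 ≤ σ S) ∧
      (∀ x : X, ∑ S ∈ univ.filter (fun S : Finset X => x ∈ S), σ S = ρ x) ∧
      (∀ C : Finset X, IsMaxChain (· ≤ ·) (C : Set X) →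
        ∑ S ∈ univ.filter (fun S : Finset X => 2 ≤ (S ∩ C).card),
          σ S * (((S ∩ C).card : ℝ) - 1) ≤ (∑ x ∈ C, ρ x) - π C) ∧
      -- optimality: every feasible solution has objective value at least that of σ
      (∀ σ' : Finset X → ℝ, (∀ S, 0 ≤ σ' S) →
        (∀ x : X, ∑ S ∈ univ.filter (fun S : Finset X => x ∈ S), σ' S = ρ x) →
        (∀ C : Finset X, IsMaxChain (· ≤ ·) (C : Set X) →
          ∑ S ∈ univ.filter (fun S : Finset X => 2 ≤ (S ∩ C).card),
            σ' S * (((S ∩ C).card : ℝ) - 1) ≤ (∑ x ∈ C, ρ x) - π C) →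
        ∑ S : Finset X, σ S ≤ ∑ S : Finset X, σ' S) ∧
      -- the optimal value equals max{max_x ρ_x, max_C π_C}
      (∀ x : X, ρ x ≤ ∑ S : Finset X, σ S) ∧
      (∀ C : Finset X, IsMaxChain (· ≤ ·) (C : Set X) → π C ≤ ∑ S : Finset X, σ S) ∧
      ((∃ x : X, ∑ S : Finset X, σ S = ρ x) ∨
        (∃ C : Finset X, IsMaxChain (· ≤ ·) (C : Set X) ∧ ∑ S : Finset X, σ S = π C)) := by
  refine ⟨arcSolution ρ π, fun S => measureReal_nonneg, sum_arcSolution_mem hρ0, fun C hC => ?_,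
    fun σ' hσ' hmarg hexc => ?_, ?_⟩
  · rw [sum_excess_eq, sum_arcSolution_inter_nonempty hρ0]
    simp_rw [sum_arcSolution_mem hρ0]
    linarith [le_volume_biUnion_arc hρ0 hnec hcons hC]
  · rw [sum_arcSolution hρ0]
    rcases optValue_eq (ρ := ρ) (π := π) with ⟨x, hx⟩ | ⟨C, hC, hCv⟩
    · exact hx ▸ le_sum_of_marginal hσ' hmarg x
    · exact hCv ▸ le_sum_of_excess_le hσ' hmarg (hexc C hC)
  · simp_rw [sum_arcSolution hρ0]
    exact ⟨le_optValue, fun C hC => le_optValue_of_isMaxChain hC, optValue_eq⟩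

/-- Theorem 2 (optimal value of (Q)): under the hypotheses of the main existence theorem,
the LP minimizing `∑_S σ_S` subject to the marginal and excess constraints has an optimal
solution whose value equals `max{max_x ρ_x, max_C π_C}`: it is a feasible solution of
minimal objective value, its value dominates every `ρ_x` and every `π_C`, and it is
attained by some `ρ_x` or some `π_C`. -/
theorem Q_optimal_value (X : Type*) [Fintype X] [Nonempty X] [DecidableEq X]
    [PartialOrder X] [DecidableRel (· ≤ · : X → X → Prop)]
    (ρ : X → ℝ) (hρ0 : ∀ x, 0 ≤ ρ x) (hρ1 : ∀ x, ρ x ≤ 1)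
    (π : Finset X → ℝ)
    (hπ1 : ∀ C : Finset X, IsMaxChain (· ≤ ·) (C : Set X) → π C ≤ 1)
    (hnec : ∀ C : Finset X, IsMaxChain (· ≤ ·) (C : Set X) → π C ≤ ∑ x ∈ C, ρ x)
    (hcons : ∀ C1 C2 : Finset X, IsMaxChain (· ≤ ·) (C1 : Set X) →
      IsMaxChain (· ≤ ·) (C2 : Set X) → ∀ x ∈ C1 ∩ C2,
      π C1 + π C2 =
        π (C1.filter (· ≤ x) ∪ C2.filter (x ≤ ·)) +
        π (C2.filter (· ≤ x) ∪ C1.filter (x ≤ ·))) :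
    ∃ σ : Finset X → ℝ,
      -- feasibility of σ for (Q)
      (∀ S, 0 ≤ σ S) ∧
      (∀ x : X, ∑ S ∈ univ.filter (fun S : Finset X => x ∈ S), σ S = ρ x) ∧
      (∀ C : Finset X, IsMaxChain (· ≤ ·) (C : Set X) →
        ∑ S ∈ univ.filter (fun S : Finset X => 2 ≤ (S ∩ C).card),
          σ S * (((S ∩ C).card : ℝ) - 1) ≤ (∑ x ∈ C, ρ x) - π C) ∧
      -- optimality: every feasible solution has objective value at least that of σ
      (∀ σ' : Finset X → ℝ, (∀ S, 0 ≤ σ' S) →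
        (∀ x : X, ∑ S ∈ univ.filter (fun S : Finset X => x ∈ S), σ' S = ρ x) →
        (∀ C : Finset X, IsMaxChain (· ≤ ·) (C : Set X) →
          ∑ S ∈ univ.filter (fun S : Finset X => 2 ≤ (S ∩ C).card),
            σ' S * (((S ∩ C).card : ℝ) - 1) ≤ (∑ x ∈ C, ρ x) - π C) →
        ∑ S : Finset X, σ S ≤ ∑ S : Finset X, σ' S) ∧
      -- the optimal value equals max{max_x ρ_x, max_C π_C}
      (∀ x : X, ρ x ≤ ∑ S : Finset X, σ S) ∧
      (∀ C : Finset X, IsMaxChain (· ≤ ·) (C : Set X) → π C ≤ ∑ S : Finset X, σ S) ∧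
      ((∃ x : X, ∑ S : Finset X, σ S = ρ x) ∨
        (∃ C : Finset X, IsMaxChain (· ≤ ·) (C : Set X) ∧ ∑ S : Finset X, σ S = π C)) :=
  Q_optimal_value_general X ρ hρ0 π hnec hcons
end

section
/- Consider the network interdiction game: let f* be an optimal primal solution and (ρ*, μ*) an optimal dual solution of the path-based LP (M_P)/(M_D), where (M_P) maximizes ∑_λ π⁰_λ f_λ over f ≥ 0 subject to ∑_{λ ∋ (i,j)} f_λ ≤ d_{ij}/p₂ and ∑_{λ ∋ (i,j)} f_λ ≤ c_{ij} for each edge (i,j), with π⁰_λ = 1 − b_λ/p₁. If σ² is a probability distribution over edge subsets with ∑_{I ∋ (i,j)} σ²_I = ρ*_{ij} for all edges (i,j) and ∑_{I: I∩λ ≠ ∅} σ²_I ≥ π⁰_λ − ∑_{(i,j)∈λ} μ*_{ij} for all s–t paths λ, then for every s–t path λ with f*_λ > 0, the inequality ∑_{I: I∩λ≠∅} σ²_I ≤ ∑_{(i,j)∈λ} ρ*_{ij} holds with equality. -/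
/-!
The hitting probability of a path is at most the sum of its edge marginals (union bound),
and at least `π⁰_λ − ∑_{e∈λ} μ*_e`, which by complementary slackness equals `∑_{e∈λ} ρ*_e`
whenever `f*_λ > 0`.
-/

open Finset

namespace Finset

variable {α : Type*} [DecidableEq α]

theorem sum_sum_filter_mem_eq_sum_card_inter_mul (s : Finset α) (𝓘 : Finset (Finset α))
    (σ : Finset α → ℝ) :
    ∑ e ∈ s, ∑ I ∈ 𝓘 with e ∈ I, σ I = ∑ I ∈ 𝓘, #(s ∩ I) * σ I := by
  simp_rw [sum_filter]
  rw [sum_comm]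
  refine sum_congr rfl fun I _ => ?_
  rw [← sum_filter, sum_const, nsmul_eq_mul, filter_mem_eq_inter]

theorem sum_filter_inter_nonempty_le (s : Finset α) (𝓘 : Finset (Finset α))
    {σ : Finset α → ℝ} (hσ : ∀ I ∈ 𝓘, 0 ≤ σ I) :
    ∑ I ∈ 𝓘 with (I ∩ s).Nonempty, σ I ≤ ∑ e ∈ s, ∑ I ∈ 𝓘 with e ∈ I, σ I := by
  rw [sum_sum_filter_mem_eq_sum_card_inter_mul, sum_filter]
  refine sum_le_sum fun I hI => ?_
  split_ifs with hmeet
  · have hcard : (1 : ℝ) ≤ #(s ∩ I) := by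
      exact_mod_cast card_pos.mpr (inter_comm I s ▸ hmeet)
    nlinarith [hσ I hI]
  · exact mul_nonneg (Nat.cast_nonneg _) (hσ I hI)

end Finset

theorem interdiction_path_hitting_eq_general (E : Type*) [Fintype E] [DecidableEq E]
    (Λ : Finset (Finset E))
    (b : E → ℝ)
    (p₁ : ℝ)
    (f : Finset E → ℝ) (ρ μ : E → ℝ)
    -- complementary slackness
    (hcs : ∀ lam ∈ Λ, 0 < f lam → ∑ e ∈ lam, (ρ e + μ e) = 1 - (∑ e ∈ lam, b e) / p₁)
    -- interdiction strategy σ²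
    (σ : Finset E → ℝ) (hσ0 : ∀ I, 0 ≤ σ I)
    (hσmarg : ∀ e : E, ∑ I ∈ univ.filter (fun I : Finset E => e ∈ I), σ I = ρ e)
    (hσpath : ∀ lam ∈ Λ,
      (1 - (∑ e ∈ lam, b e) / p₁) - ∑ e ∈ lam, μ e ≤
        ∑ I ∈ univ.filter (fun I : Finset E => (I ∩ lam).Nonempty), σ I) :
    ∀ lam ∈ Λ, 0 < f lam →
      ∑ I ∈ univ.filter (fun I : Finset E => (I ∩ lam).Nonempty), σ I = ∑ e ∈ lam, ρ e := by
  intro lam hlam hflam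
  have union_bound := sum_filter_inter_nonempty_le lam univ fun I _ => hσ0 I
  simp only [hσmarg] at union_bound
  have slackness := hcs lam hlam hflam
  rw [sum_add_distrib] at slackness
  linarith [hσpath lam hlam]

/-- Complementary slackness in the interdiction game: let `f*` be an optimal primal and
`(ρ*, μ*)` an optimal dual solution of (M_P)/(M_D) (feasibility and complementary
slackness are hypothesized), and let `σ²` be a probability distribution over edge subsets
with edge marginals `ρ*` and path-hitting probabilities at least `π⁰_λ − ∑_{e∈λ} μ*_e`.
Then for every `s`–`t` path `λ` with `f*_λ > 0`, the hitting probability of `λ` equals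
`∑_{e∈λ} ρ*_e`. Here edges form a finite type `E`, `Λ` is the set of `s`–`t` paths
(viewed as edge subsets), and `π⁰_λ = 1 − (∑_{e∈λ} b_e)/p₁`. -/
theorem interdiction_path_hitting_eq (E : Type*) [Fintype E] [DecidableEq E]
    (Λ : Finset (Finset E))
    (b c d : E → ℝ) (hb : ∀ e, 0 < b e) (hc : ∀ e, 0 < c e) (hd : ∀ e, 0 < d e)
    (p₁ p₂ : ℝ) (hp₁ : 0 < p₁) (hp₂ : 0 < p₂)
    (f : Finset E → ℝ) (ρ μ : E → ℝ)
    -- primal feasibility of f*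
    (hf0 : ∀ lam ∈ Λ, 0 ≤ f lam)
    (hfd : ∀ e : E, ∑ lam ∈ Λ.filter (fun lam => e ∈ lam), f lam ≤ d e / p₂)
    (hfc : ∀ e : E, ∑ lam ∈ Λ.filter (fun lam => e ∈ lam), f lam ≤ c e)
    -- dual feasibility of (ρ*, μ*)
    (hρ0 : ∀ e, 0 ≤ ρ e) (hμ0 : ∀ e, 0 ≤ μ e)
    (hdual : ∀ lam ∈ Λ, 1 - (∑ e ∈ lam, b e) / p₁ ≤ ∑ e ∈ lam, (ρ e + μ e))
    -- complementary slackness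
    (hcs : ∀ lam ∈ Λ, 0 < f lam → ∑ e ∈ lam, (ρ e + μ e) = 1 - (∑ e ∈ lam, b e) / p₁)
    -- interdiction strategy σ²
    (σ : Finset E → ℝ) (hσ0 : ∀ I, 0 ≤ σ I) (hσ1 : ∑ I : Finset E, σ I = 1)
    (hσmarg : ∀ e : E, ∑ I ∈ univ.filter (fun I : Finset E => e ∈ I), σ I = ρ e)
    (hσpath : ∀ lam ∈ Λ,
      (1 - (∑ e ∈ lam, b e) / p₁) - ∑ e ∈ lam, μ e ≤
        ∑ I ∈ univ.filter (fun I : Finset E => (I ∩ lam).Nonempty), σ I) :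
    ∀ lam ∈ Λ, 0 < f lam →
      ∑ I ∈ univ.filter (fun I : Finset E => (I ∩ lam).Nonempty), σ I = ∑ e ∈ lam, ρ e :=
  interdiction_path_hitting_eq_general E Λ b p₁ f ρ μ hcs σ hσ0 hσmarg hσpath
end
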